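/- arXiv:1302.7219 — 7 statements merged into one kernel-verified Lean document; each statement's English description precedes it below -/
import Mathlib

section
/- (Self-similar solutions: weak transport identity.) Let d ≥ 1 be an integer, α ∈ (0,2], m > 1, and set λ = 1/(d(m-1)+α), k_{α,d} = d Γ(d/2) / ((d(m-1)+α) 2^α Γ(1+α/2) Γ((d+α)/2)), Φ_{α,m}(y) = (k_{α,d}(1-|y|²)_+^{α/2})^{1/(m-1)}, and u(t,x) = t^{-dλ} Φ_{α,m}(t^{-λ} x) for t > 0, x ∈ ℝ^d. Then for every smooth compactly supported test function φ : (0,∞) × ℝ^d → ℝ, ∫_0^∞ ∫_{ℝ^d} [ u(t,x) ∂_t φ(t,x) + λ t^{-1} u(t,x) ( x · ∇_x φ(t,x) ) ] dx dt = 0. -/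
open MeasureTheory Real
open scoped RealInnerProductSpace

theorem self_similar_solution_weak_transport_identity
    (d : ℕ) (hd : 1 ≤ d) (α m lam k : ℝ) (hα0 : 0 < α) (hα2 : α ≤ 2) (hm : 1 < m)
    (hlam : lam = 1 / ((d : ℝ) * (m - 1) + α))
    (hk : k = (d : ℝ) * Real.Gamma ((d : ℝ) / 2) /
      (((d : ℝ) * (m - 1) + α) * 2 ^ α * Real.Gamma (1 + α / 2) *
        Real.Gamma (((d : ℝ) + α) / 2)))
    (Φ : EuclideanSpace ℝ (Fin d) → ℝ)
    (hΦ : Φ = fun y => (k * (max (1 - ‖y‖ ^ 2) 0) ^ (α / 2)) ^ (1 / (m - 1)))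
    (u : ℝ → EuclideanSpace ℝ (Fin d) → ℝ)
    (hu : u = fun t x => t ^ (-(d : ℝ) * lam) * Φ ((t ^ (-lam)) • x))
    (φ : ℝ → EuclideanSpace ℝ (Fin d) → ℝ)
    (hφ_smooth : ContDiff ℝ (⊤ : ℕ∞) (Function.uncurry φ))
    (hφ_supp : HasCompactSupport (Function.uncurry φ))
    (hφ_pos : tsupport (Function.uncurry φ) ⊆ Set.Ioi (0 : ℝ) ×ˢ Set.univ) :
    ∫ t in Set.Ioi (0 : ℝ), ∫ x : EuclideanSpace ℝ (Fin d),
        (u t x * deriv (fun s => φ s x) t +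
          lam * t⁻¹ * u t x * ⟪x, gradient (φ t) x⟫) = 0 := by
  classical
  have hm1 : (0:ℝ) < m - 1 := by linarith
  have hd1 : (1:ℝ) ≤ (d:ℝ) := by exact_mod_cast hd
  have hψdiff : Differentiable ℝ (Function.uncurry φ) := hφ_smooth.differentiable (by simp)
  -- continuity of Φ
  have hΦcont : Continuous Φ := by
    rw [hΦ]
    have h1 : Continuous fun y : EuclideanSpace ℝ (Fin d) =>
        k * (max (1 - ‖y‖ ^ 2) 0) ^ (α / 2) :=
      continuous_const.mul (((continuous_const.sub ((continuous_norm).pow 2)).max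
        continuous_const).rpow_const (fun y => Or.inr (by positivity)))
    exact h1.rpow_const (fun y => Or.inr (by positivity))
  -- Φ vanishes outside the unit ball
  have hΦ0 : ∀ y : EuclideanSpace ℝ (Fin d), 1 < ‖y‖ → Φ y = 0 := by
    intro y hy
    have h2 : max (1 - ‖y‖ ^ 2) 0 = 0 := max_eq_right (by nlinarith)
    rw [hΦ]
    simp only [h2]
    rw [Real.zero_rpow (by positivity : (0:ℝ) < α / 2).ne', mul_zero,
      Real.zero_rpow (by positivity : (0:ℝ) < 1 / (m - 1)).ne']
  have hΦsupp : HasCompactSupport Φ := by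
    apply HasCompactSupport.intro (isCompact_closedBall (0 : EuclideanSpace ℝ (Fin d)) 1)
    intro y hy
    exact hΦ0 y (by simpa [Metric.mem_closedBall, dist_zero_right, not_le] using hy)
  -- time support bounds
  obtain ⟨ε, T, hε, hsupp⟩ : ∃ ε T : ℝ, 0 < ε ∧
      tsupport (Function.uncurry φ) ⊆ Set.Icc ε T ×ˢ Set.univ := by
    rcases (tsupport (Function.uncurry φ)).eq_empty_or_nonempty with h | h
    · exact ⟨1, 1, one_pos, by simp [h]⟩
    · have hK : IsCompact (Prod.fst '' tsupport (Function.uncurry φ)) :=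
        hφ_supp.image continuous_fst
      have hne : (Prod.fst '' tsupport (Function.uncurry φ)).Nonempty := h.image _
      refine ⟨sInf (Prod.fst '' tsupport (Function.uncurry φ)),
        sSup (Prod.fst '' tsupport (Function.uncurry φ)), ?_, ?_⟩
      · obtain ⟨p, hp, hfst⟩ := hK.sInf_mem hne
        have := hφ_pos hp
        rw [Set.prodMk_mem_set_prod_eq] at this
        simpa [← hfst] using this.1
      · rintro ⟨t, x⟩ hp
        refine ⟨⟨?_, ?_⟩, trivial⟩
        · exact csInf_le hK.bddBelow ⟨(t,x), hp, rfl⟩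
        · exact le_csSup hK.bddAbove ⟨(t,x), hp, rfl⟩
  have hφzero : ∀ (t : ℝ) x, t ∉ Set.Icc ε T → φ t x = 0 := by
    intro t x ht
    have h1 : (t, x) ∉ tsupport (Function.uncurry φ) := fun h =>
      ht (by simpa using (hsupp h).1)
    exact image_eq_zero_of_notMem_tsupport (f := Function.uncurry φ) h1
  have hfzero : ∀ (t : ℝ) x, t ∉ Set.Icc ε T → fderiv ℝ (Function.uncurry φ) (t, x) = 0 := by
    intro t x ht
    have h1 : (t, x) ∉ tsupport (Function.uncurry φ) := fun h =>
      ht (by simpa using (hsupp h).1)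
    by_contra h2
    exact h1 (support_fderiv_subset ℝ (by simpa [Function.mem_support] using h2))
  -- the key function D t y = ∂_t (Φ y * φ t (t^lam • y))
  set D : ℝ → EuclideanSpace ℝ (Fin d) → ℝ := fun t y =>
    Φ y * (fderiv ℝ (Function.uncurry φ) (t, (t ^ lam) • y))
      (1, (lam * t ^ (lam - 1)) • y) with hDdef
  have hD0 : ∀ (t : ℝ) y, t ∉ Set.Icc ε T → D t y = 0 := by
    intro t y ht
    rw [hDdef]
    simp only [hfzero t _ ht, ContinuousLinearMap.zero_apply, mul_zero]
  -- D is the derivative of s ↦ Φ y * φ s (s^lam • y)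
  have hgderiv : ∀ (y) (t : ℝ),
      HasDerivAt (fun s : ℝ => Φ y * φ s ((s ^ lam) • y)) (D t y) t := by
    intro y t
    rcases lt_or_ge t ε with h | h
    · have hz : (fun s : ℝ => Φ y * φ s ((s ^ lam) • y)) =ᶠ[nhds t] fun _ => (0:ℝ) := by
        filter_upwards [Iio_mem_nhds h] with s hs
        rw [hφzero s _ (fun hc => absurd hc.1 (not_le.mpr hs)), mul_zero]
      have h0 : D t y = 0 := hD0 t y (fun hc => absurd hc.1 (not_le.mpr h))
      rw [h0]
      exact (hasDerivAt_const t (0:ℝ)).congr_of_eventuallyEq hz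
    · have ht0 : 0 < t := lt_of_lt_of_le hε h
      have h1 : HasDerivAt (fun s : ℝ => s ^ lam) (lam * t ^ (lam - 1)) t :=
        Real.hasDerivAt_rpow_const (Or.inl ht0.ne')
      have h2 : HasDerivAt (fun s : ℝ => (s, (s ^ lam) • y))
          ((1 : ℝ), (lam * t ^ (lam - 1)) • y) t :=
        (hasDerivAt_id t).prodMk (h1.smul_const y)
      have h3 := ((hψdiff (t, (t ^ lam) • y)).hasFDerivAt).comp_hasDerivAt t h2
      exact (h3.const_mul (Φ y))
  -- continuity of D
  have hDcont : Continuous (Function.uncurry D) := by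
    rw [continuous_iff_continuousAt]
    rintro ⟨t, y⟩
    rcases lt_or_ge t ε with h | h
    · have hmem : Set.Iio ε ×ˢ (Set.univ : Set (EuclideanSpace ℝ (Fin d))) ∈
          nhds (t, y) := prod_mem_nhds (Iio_mem_nhds h) Filter.univ_mem
      have heq : Function.uncurry D =ᶠ[nhds (t, y)] fun _ => (0:ℝ) := by
        filter_upwards [hmem] with p hp
        exact hD0 p.1 p.2 (fun hc => absurd hc.1 (not_le.mpr hp.1))
      exact ContinuousAt.congr continuousAt_const heq.symm
    · have ht0 : 0 < t := lt_of_lt_of_le hε h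
      have hc1 : ContinuousAt (fun p : ℝ × EuclideanSpace ℝ (Fin d) =>
          fderiv ℝ (Function.uncurry φ) (p.1, (p.1 ^ lam) • p.2)) (t, y) := by
        apply (hφ_smooth.continuous_fderiv (by simp)).continuousAt.comp
        apply ContinuousAt.prodMk continuousAt_fst
        exact ((Real.continuousAt_rpow_const t lam (Or.inl ht0.ne')).comp_of_eq
          continuousAt_fst rfl).smul continuousAt_snd
      have hc2 : ContinuousAt (fun p : ℝ × EuclideanSpace ℝ (Fin d) =>
          ((1:ℝ), (lam * p.1 ^ (lam - 1)) • p.2)) (t, y) := by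
        apply ContinuousAt.prodMk continuousAt_const
        exact (continuousAt_const.mul ((Real.continuousAt_rpow_const t (lam - 1)
          (Or.inl ht0.ne')).comp_of_eq continuousAt_fst rfl)).smul continuousAt_snd
      have happ := (isBoundedBilinearMap_apply (𝕜 := ℝ)
        (E := ℝ × EuclideanSpace ℝ (Fin d)) (F := ℝ)).continuous
      exact ((hΦcont.comp continuous_snd).continuousAt).mul
        (happ.continuousAt.comp (hc1.prodMk hc2))
  -- compact support of D
  have hDsupp : HasCompactSupport (Function.uncurry D) := by
    apply HasCompactSupport.intro ((isCompact_Icc (a := ε) (b := T)).prod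
      (isCompact_closedBall (0 : EuclideanSpace ℝ (Fin d)) 1))
    rintro ⟨t, y⟩ hty
    rw [Set.mem_prod, not_and_or] at hty
    rcases hty with h | h
    · exact hD0 t y h
    · have : (1:ℝ) < ‖y‖ := by
        simpa [Metric.mem_closedBall, dist_zero_right, not_le] using h
      show D t y = 0
      rw [hDdef]
      simp only [hΦ0 y this, zero_mul]
  -- integrability of D on (Ioi 0) × ℝ^d
  have hDint : Integrable (Function.uncurry D)
      ((volume.restrict (Set.Ioi (0:ℝ))).prod volume) := by
    rw [Measure.restrict_prod_eq_prod_univ]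
    exact (hDcont.integrable_of_hasCompactSupport hDsupp).restrict
  -- FTC in t for fixed y
  have hFTC : ∀ y, (∫ t in Set.Ioi (0:ℝ), D t y) = 0 := by
    intro y
    have hderiv_eq : deriv (fun s : ℝ => Φ y * φ s ((s ^ lam) • y)) = fun t => D t y :=
      funext fun t => (hgderiv y t).deriv
    have hC1 : ContDiff ℝ 1 (fun s : ℝ => Φ y * φ s ((s ^ lam) • y)) := by
      rw [contDiff_one_iff_deriv]
      refine ⟨fun t => (hgderiv y t).differentiableAt, ?_⟩
      rw [hderiv_eq]
      exact hDcont.comp (continuous_id.prodMk continuous_const)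
    have hsupp' : HasCompactSupport (fun s : ℝ => Φ y * φ s ((s ^ lam) • y)) := by
      apply HasCompactSupport.intro (isCompact_Icc (a := ε) (b := T))
      intro s hs
      rw [hφzero s _ hs, mul_zero]
    have h0 := HasCompactSupport.integral_Ioi_deriv_eq hC1 hsupp' 0
    rw [hderiv_eq] at h0
    rw [h0, hφzero 0 _ (fun hc => absurd hc.1 (not_le.mpr hε)), mul_zero, neg_zero]
  -- the inner integral equals ∫ D t y dy, for t > 0
  have hinner : ∀ t ∈ Set.Ioi (0:ℝ),
      (∫ x : EuclideanSpace ℝ (Fin d),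
        (u t x * deriv (fun s => φ s x) t +
          lam * t⁻¹ * u t x * ⟪x, gradient (φ t) x⟫))
      = ∫ y, D t y := by
    intro t ht
    have ht0 : (0:ℝ) < t := ht
    set f : EuclideanSpace ℝ (Fin d) → ℝ := fun x =>
      u t x * deriv (fun s => φ s x) t +
        lam * t⁻¹ * u t x * ⟪x, gradient (φ t) x⟫ with hfdef
    set R := t ^ lam with hRdef
    have hRpos : 0 < R := Real.rpow_pos_of_pos ht0 lam
    have hRd : (0:ℝ) < R ^ d := pow_pos hRpos d
    have key := MeasureTheory.Measure.integral_comp_smul (μ := volume) f R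
    rw [finrank_euclideanSpace_fin] at key
    have hpoint : ∀ y : EuclideanSpace ℝ (Fin d), D t y = (R ^ d) • f (R • y) := by
      intro y
      have hRinv : (t ^ (-lam)) • (R • y) = y := by
        rw [smul_smul, hRdef, ← Real.rpow_add ht0, neg_add_cancel, Real.rpow_zero, one_smul]
      have hu1 : u t (R • y) = t ^ (-(d:ℝ) * lam) * Φ y := by
        rw [hu]; simp only; rw [hRinv]
      have hRd_eq : R ^ d * t ^ (-(d:ℝ) * lam) = 1 := by
        rw [hRdef, ← Real.rpow_natCast (t ^ lam) d, ← Real.rpow_mul ht0.le,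
          ← Real.rpow_add ht0]
        rw [show lam * (d:ℝ) + -(d:ℝ) * lam = 0 by ring, Real.rpow_zero]
      have hcoef : lam * t⁻¹ * R = lam * t ^ (lam - 1) := by
        rw [hRdef, mul_assoc, ← Real.rpow_neg_one t, ← Real.rpow_add ht0]
        ring_nf
      have hψd : HasFDerivAt (Function.uncurry φ)
          (fderiv ℝ (Function.uncurry φ) (t, R • y)) (t, R • y) :=
        (hψdiff (t, R • y)).hasFDerivAt
      have hderiv1 : deriv (fun s => φ s (R • y)) t
          = (fderiv ℝ (Function.uncurry φ) (t, R • y)) (1, 0) := by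
        have h2 : HasDerivAt (fun s : ℝ => (s, R • y)) ((1:ℝ), (0 : EuclideanSpace ℝ (Fin d))) t :=
          (hasDerivAt_id t).prodMk (hasDerivAt_const t (R • y))
        exact (hψd.comp_hasDerivAt t h2).deriv
      have hgrad : ⟪gradient (φ t) (R • y), y⟫
          = (fderiv ℝ (Function.uncurry φ) (t, R • y)) (0, y) := by
        have hcomp := hψd.comp (R • y)
          (hasFDerivAt_prodMk_right (𝕜 := ℝ) t (R • y))
        have hfx : fderiv ℝ (φ t) (R • y)
            = (fderiv ℝ (Function.uncurry φ) (t, R • y)).comp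
              (ContinuousLinearMap.inr ℝ ℝ (EuclideanSpace ℝ (Fin d))) := hcomp.fderiv
        rw [gradient, InnerProductSpace.toDual_symm_apply, hfx]
        rfl
      have hsplit : (fderiv ℝ (Function.uncurry φ) (t, R • y))
            ((1:ℝ), (lam * t ^ (lam - 1)) • y)
          = (fderiv ℝ (Function.uncurry φ) (t, R • y)) (1, 0)
            + (lam * t ^ (lam - 1)) * (fderiv ℝ (Function.uncurry φ) (t, R • y)) (0, y) := by
        have : ((1:ℝ), (lam * t ^ (lam - 1)) • y)
            = ((1:ℝ), (0 : EuclideanSpace ℝ (Fin d)))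
              + (lam * t ^ (lam - 1)) • ((0:ℝ), y) := by
          simp [Prod.ext_iff, Prod.smul_def]
        rw [this, ContinuousLinearMap.map_add, ContinuousLinearMap.map_smul, smul_eq_mul]
      have hip : ⟪R • y, gradient (φ t) (R • y)⟫
          = R * (fderiv ℝ (Function.uncurry φ) (t, R • y)) (0, y) := by
        rw [real_inner_smul_left, real_inner_comm, hgrad]
      rw [hDdef]
      simp only
      rw [hsplit, hfdef]
      simp only
      rw [hu1, hderiv1, hip, smul_eq_mul]
      have e2 : lam * t ^ (lam - 1) = lam * t⁻¹ * R := hcoef.symm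
      rw [e2]
      set A := (fderiv ℝ (Function.uncurry φ) (t, R • y)) (1, 0) with hA
      set B := (fderiv ℝ (Function.uncurry φ) (t, R • y)) (0, y) with hB
      linear_combination (-(Φ y * A) - lam * t⁻¹ * R * Φ y * B) * hRd_eq
    calc (∫ x, f x)
        = (R ^ d) • ∫ y, f (R • y) := by
          rw [key, abs_of_pos (inv_pos.mpr hRd), smul_smul,
            mul_inv_cancel₀ hRd.ne', one_smul]
      _ = ∫ y, (R ^ d) • f (R • y) := (integral_smul _ _).symm
      _ = ∫ y, D t y := by
          exact integral_congr_ae (Filter.Eventually.of_forall fun y => (hpoint y).symm)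
  -- final assembly
  calc (∫ t in Set.Ioi (0:ℝ), ∫ x : EuclideanSpace ℝ (Fin d),
        (u t x * deriv (fun s => φ s x) t +
          lam * t⁻¹ * u t x * ⟪x, gradient (φ t) x⟫))
      = ∫ t in Set.Ioi (0:ℝ), ∫ y, D t y := by
        exact setIntegral_congr_fun measurableSet_Ioi hinner
    _ = ∫ y, ∫ t in Set.Ioi (0:ℝ), D t y := integral_integral_swap hDint
    _ = 0 := by simp only [hFTC, integral_zero]
end

section
/- (Fractional Nash inequality.) Let d ≥ 1 be an integer and α ∈ (0,2). There exists a constant C > 0, depending only on d and α, such that for every function v ∈ L¹(ℝ^d) ∩ L²(ℝ^d), ‖v‖_{L²}^{2(1 + α/d)} ≤ C · ( ∬_{ℝ^d × ℝ^d} (v(x) - v(y))² / |x - y|^{d+α} dx dy ) · ‖v‖_{L¹}^{2α/d}, where the double integral is understood as a value in [0,∞]. -/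
open MeasureTheory Real Metric
open scoped ENNReal


lemma cs_sq {X : Type*} [MeasurableSpace X] (μ : Measure X) (f : X → ℝ≥0∞) (hf : AEMeasurable f μ) :
    (∫⁻ x, f x ∂μ)^2 ≤ μ Set.univ * ∫⁻ x, (f x)^2 ∂μ := by
  have conj : Real.HolderConjugate 2 2 := Real.HolderConjugate.two_two
  have h := ENNReal.lintegral_mul_le_Lp_mul_Lq μ conj hf (aemeasurable_const (b := (1:ℝ≥0∞)))
  simp only [Pi.mul_apply, mul_one, ENNReal.one_rpow, lintegral_const, one_mul] at h
  have h2 := pow_le_pow_left₀ zero_le h 2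
  have e1 : ∀ z : ℝ≥0∞, (z ^ (1/(2:ℝ)))^2 = z := by
    intro z
    rw [← ENNReal.rpow_natCast (z ^ (1/(2:ℝ))) 2, ← ENNReal.rpow_mul]
    norm_num
  have e2 : ∀ x, f x ^ (2:ℝ) = (f x)^2 := by
    intro x; rw [← ENNReal.rpow_natCast (f x) 2]; norm_num
  calc (∫⁻ x, f x ∂μ)^2 ≤ ((∫⁻ x, f x ^ (2:ℝ) ∂μ) ^ (1/(2:ℝ)) * (μ Set.univ) ^ (1/(2:ℝ)))^2 := h2
    _ = μ Set.univ * ∫⁻ x, (f x)^2 ∂μ := by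
        rw [mul_pow, e1, e1, mul_comm, lintegral_congr e2]



lemma avg_diff_sq {E : Type*} [NormedAddCommGroup E] [MeasurableSpace E] [BorelSpace E]
    {μ : Measure E} (v : E → ℝ) (hm : Measurable v) (hv : Integrable v μ) {r : ℝ} (hr : 0 < r)
    (x : E) (hB0 : μ (ball x r) ≠ 0) (hBt : μ (ball x r) ≠ ⊤) :
    ENNReal.ofReal ((v x - (∫ y in ball x r, v y ∂μ) / (μ (ball x r)).toReal)^2) ≤
      (μ (ball x r))⁻¹ * ∫⁻ y in ball x r, ENNReal.ofReal ((v x - v y)^2) ∂μ := by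
  set B := ball x r with hBdef
  set μB := μ B with hμB
  set J := ∫⁻ y in B, ENNReal.ofReal ((v x - v y)^2) ∂μ with hJdef
  by_cases hJt : J = ⊤
  · rw [hJt, ENNReal.mul_top (ENNReal.inv_ne_zero.2 hBt)]
    exact le_top
  set f : E → ℝ := fun y => v x - v y with hfdef
  have hfm : Measurable f := measurable_const.sub hm
  have hI2 : ∀ y, (ENNReal.ofReal |f y|)^2 = ENNReal.ofReal ((v x - v y)^2) := by
    intro y; rw [← ENNReal.ofReal_pow (abs_nonneg _), sq_abs]
  have hcs := cs_sq (μ.restrict B) (fun y => ENNReal.ofReal |f y|)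
    (hfm.abs.ennreal_ofReal.aemeasurable)
  rw [Measure.restrict_apply_univ] at hcs
  set I1 := ∫⁻ y in B, ENNReal.ofReal |f y| ∂μ with hI1def
  have hcs' : I1^2 ≤ μB * J := by
    refine le_trans hcs (le_of_eq ?_)
    congr 1
    exact lintegral_congr hI2
  have hfinRHS : μB * J ≠ ⊤ := ENNReal.mul_ne_top hBt hJt
  have hI1t : I1 ≠ ⊤ := by
    intro h
    rw [h] at hcs'
    rw [show ((⊤:ℝ≥0∞)^2) = ⊤ from by simp] at hcs'
    exact hfinRHS (top_le_iff.mp hcs')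
  have hV : (0:ℝ) < μB.toReal := ENNReal.toReal_pos hB0 hBt
  have hcint : IntegrableOn (fun _ => v x) B μ :=
    integrableOn_const hBt enorm_ne_top
  have havg : v x - (∫ y in B, v y ∂μ) / μB.toReal = (∫ y in B, f y ∂μ) / μB.toReal := by
    rw [hfdef]
    rw [integral_sub hcint hv.integrableOn, setIntegral_const, smul_eq_mul]
    field_simp
    rfl
  have hnorm : |∫ y in B, f y ∂μ| ≤ I1.toReal := by
    have h := norm_integral_le_lintegral_norm (μ := μ.restrict B) f
    simpa [Real.norm_eq_abs] using h
  rw [havg]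
  have step1 : ENNReal.ofReal (((∫ y in B, f y ∂μ) / μB.toReal)^2) ≤ (I1 / μB)^2 := by
    have habs : |(∫ y in B, f y ∂μ) / μB.toReal| ≤ I1.toReal / μB.toReal := by
      rw [abs_div, abs_of_pos hV]
      exact div_le_div_of_nonneg_right hnorm hV.le
    calc ENNReal.ofReal (((∫ y in B, f y ∂μ) / μB.toReal)^2)
        = (ENNReal.ofReal |(∫ y in B, f y ∂μ) / μB.toReal|)^2 := by
          rw [← ENNReal.ofReal_pow (abs_nonneg _), sq_abs]
      _ ≤ (ENNReal.ofReal (I1.toReal / μB.toReal))^2 :=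
          pow_le_pow_left₀ zero_le (ENNReal.ofReal_le_ofReal habs) 2
      _ = (I1 / μB)^2 := by
          rw [ENNReal.ofReal_div_of_pos hV, ENNReal.ofReal_toReal hI1t, ENNReal.ofReal_toReal hBt]
  calc ENNReal.ofReal (((∫ y in B, f y ∂μ) / μB.toReal)^2)
      ≤ (I1 / μB)^2 := step1
    _ = I1^2 / μB^2 := by rw [div_eq_mul_inv, mul_pow, ← ENNReal.inv_pow, ← div_eq_mul_inv]
    _ ≤ (μB * J) / μB^2 := ENNReal.div_le_div_right hcs' _
    _ = μB⁻¹ * J := by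
        rw [sq, mul_comm μB J, ENNReal.mul_div_mul_right _ _ hB0 hBt] -- guess
        rw [div_eq_mul_inv, mul_comm]



lemma euclid_nontrivial (d : ℕ) (hd : 1 ≤ d) : Nontrivial (EuclideanSpace ℝ (Fin d)) := by
  have h1 : (EuclideanSpace.single (⟨0, Nat.lt_of_lt_of_le Nat.zero_lt_one hd⟩ : Fin d) (1:ℝ)) ≠ 0 := by
    intro h
    have := congrArg (fun z : EuclideanSpace ℝ (Fin d) => z ⟨0, Nat.lt_of_lt_of_le Nat.zero_lt_one hd⟩) h
    simp [EuclideanSpace.single_apply] at this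
  exact ⟨_, _, h1⟩

lemma ball_const_vol (d : ℕ) (hd : 1 ≤ d) {r : ℝ} (hr : 0 < r) (x : EuclideanSpace ℝ (Fin d)) :
    volume (ball x r) = volume (ball (0 : EuclideanSpace ℝ (Fin d)) r) := by
  haveI := euclid_nontrivial d hd
  rw [Measure.addHaar_ball volume x hr.le, Measure.addHaar_ball volume 0 hr.le]

set_option maxHeartbeats 2000000 in
lemma nash_step (d : ℕ) (hd : 1 ≤ d) (α : ℝ) (hα0 : 0 < α)
    (v : EuclideanSpace ℝ (Fin d) → ℝ) (hm : Measurable v) (hv : Integrable v volume)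
    {r : ℝ} (hr : 0 < r) :
    (∫⁻ x, ENNReal.ofReal ((v x)^2)) ≤
      2 * ((volume (ball (0 : EuclideanSpace ℝ (Fin d)) r))⁻¹ * ENNReal.ofReal (r ^ ((d:ℝ) + α)) *
        (∫⁻ x, ∫⁻ y, ENNReal.ofReal ((v x - v y)^2 / ‖x - y‖ ^ ((d:ℝ)+α))))
      + 2 * ((volume (ball (0 : EuclideanSpace ℝ (Fin d)) r))⁻¹ *
        (∫⁻ x, ENNReal.ofReal |v x|)^2) := by
  haveI := euclid_nontrivial d hd
  set p : ℝ := (d:ℝ) + α with hpdef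
  have hp : 0 < p := by positivity
  set μB := volume (ball (0 : EuclideanSpace ℝ (Fin d)) r) with hμBdef
  have hball : ∀ x : EuclideanSpace ℝ (Fin d), volume (ball x r) = μB :=
    fun x => ball_const_vol d hd hr x
  have hB0 : μB ≠ 0 := (measure_ball_pos volume (0:EuclideanSpace ℝ (Fin d)) hr).ne'
  have hBt : μB ≠ ⊤ := measure_ball_lt_top.ne
  have hV : (0:ℝ) < μB.toReal := ENNReal.toReal_pos hB0 hBt
  set L1 := ∫⁻ x : EuclideanSpace ℝ (Fin d), ENNReal.ofReal |v x| with hL1def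
  have hL1t : L1 ≠ ⊤ := by
    have h2 : (∫⁻ x : EuclideanSpace ℝ (Fin d), (‖v x‖₊ : ℝ≥0∞)) < ⊤ := hv.2
    have he : ∀ x : EuclideanSpace ℝ (Fin d), ENNReal.ofReal |v x| = (‖v x‖₊ : ℝ≥0∞) :=
      fun x => by rw [← enorm_eq_nnnorm, ← ofReal_norm, Real.norm_eq_abs]
    rw [hL1def]
    simp only [he]
    exact h2.ne
  set G : EuclideanSpace ℝ (Fin d) → EuclideanSpace ℝ (Fin d) → ℝ≥0∞ :=
    fun x y => ENNReal.ofReal ((v x - v y)^2 / ‖x - y‖ ^ p) with hGdef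
  set vr : EuclideanSpace ℝ (Fin d) → ℝ := fun x => (∫ y in ball x r, v y) / μB.toReal with hvrdef
  have hGm : Measurable (Function.uncurry G) := by
    apply Measurable.ennreal_ofReal
    apply Measurable.div
    · exact (((hm.comp measurable_fst).sub (hm.comp measurable_snd)).pow_const 2)
    · exact ((continuous_fst.sub continuous_snd).norm.rpow_const
        (fun _ => Or.inr hp.le)).measurable
  set H : EuclideanSpace ℝ (Fin d) → EuclideanSpace ℝ (Fin d) → ℝ≥0∞ :=
    fun x y => (ball x r).indicator (fun z => ENNReal.ofReal |v z|) y with hHdef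
  have hHm : Measurable (Function.uncurry H) := by
    have heq : Function.uncurry H = fun q : EuclideanSpace ℝ (Fin d) × EuclideanSpace ℝ (Fin d) =>
        Set.indicator {q : EuclideanSpace ℝ (Fin d) × EuclideanSpace ℝ (Fin d) | dist q.2 q.1 < r}
          (fun q => ENNReal.ofReal |v q.2|) q := by
      ext ⟨x, y⟩
      simp only [Function.uncurry, hHdef, Set.indicator, mem_ball, Set.mem_setOf_eq]
    rw [heq]
    exact Measurable.indicator ((hm.comp measurable_snd).abs.ennreal_ofReal)
      ((isOpen_lt (continuous_dist.comp (continuous_snd.prodMk continuous_fst))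
        continuous_const).measurableSet)
  set A : EuclideanSpace ℝ (Fin d) → ℝ≥0∞ :=
    fun x => μB⁻¹ * ENNReal.ofReal (r ^ p) * ∫⁻ y, G x y with hAdef
  set Bd : EuclideanSpace ℝ (Fin d) → ℝ≥0∞ :=
    fun x => (μB⁻¹ * L1) * (μB⁻¹ * ∫⁻ y, H x y) with hBddef
  have hGim : Measurable fun x => ∫⁻ y, G x y := hGm.lintegral_prod_right
  have hHim : Measurable fun x => ∫⁻ y, H x y := hHm.lintegral_prod_right
  have hAm : Measurable A := hGim.const_mul _
  have hBdm : Measurable Bd := (hHim.const_mul μB⁻¹).const_mul _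
  -- pointwise bound 2
  have hpt2 : ∀ x, ENNReal.ofReal ((v x - vr x)^2) ≤ A x := by
    intro x
    have h1 : ENNReal.ofReal ((v x - vr x)^2) ≤
        μB⁻¹ * ∫⁻ y in ball x r, ENNReal.ofReal ((v x - v y)^2) := by
      have h := avg_diff_sq v hm hv hr x (by rw [hball x]; exact hB0) (by rw [hball x]; exact hBt)
      rw [hball x] at h
      exact h
    refine h1.trans ?_
    have hA : A x = μB⁻¹ * (ENNReal.ofReal (r ^ p) * ∫⁻ y, G x y) := by
      rw [hAdef]; ring
    rw [hA]
    refine mul_le_mul_right ?_ μB⁻¹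
    have key : ∀ y ∈ ball x r, ENNReal.ofReal ((v x - v y)^2) ≤ ENNReal.ofReal (r ^ p) * G x y := by
      intro y hy
      rw [hGdef, ← ENNReal.ofReal_mul (rpow_nonneg hr.le p)]
      apply ENNReal.ofReal_le_ofReal
      set t := ‖x - y‖ with htdef
      have ht0 : 0 ≤ t := norm_nonneg _
      have htr : t < r := by
        rw [htdef, ← dist_eq_norm, dist_comm]
        exact mem_ball.mp hy
      rcases eq_or_lt_of_le ht0 with h | h
      · have hxy : v x - v y = 0 := by
          have hxy' : x = y := by
            rw [← sub_eq_zero]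
            exact norm_eq_zero.mp h.symm
          rw [hxy', sub_self]
        rw [hxy]
        simp
      · have htp : 0 < t ^ p := rpow_pos_of_pos h p
        have hle : t ^ p ≤ r ^ p := rpow_le_rpow ht0 htr.le hp.le
        have h1 : 1 ≤ r ^ p / t ^ p := (one_le_div htp).2 hle
        have hrw : r ^ p * ((v x - v y)^2 / t ^ p) = (v x - v y)^2 * (r ^ p / t ^ p) := by
          ring
        rw [hrw]
        exact le_mul_of_one_le_right (sq_nonneg _) h1
    have hGxm : Measurable (G x) := hGm.comp (measurable_const.prodMk measurable_id)
    calc ∫⁻ y in ball x r, ENNReal.ofReal ((v x - v y)^2)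
        ≤ ∫⁻ y in ball x r, ENNReal.ofReal (r ^ p) * G x y := by
          refine setLIntegral_mono (hGxm.const_mul _) key
      _ = ENNReal.ofReal (r ^ p) * ∫⁻ y in ball x r, G x y := by
          rw [lintegral_const_mul _ hGxm]
      _ ≤ ENNReal.ofReal (r ^ p) * ∫⁻ y, G x y :=
          mul_le_mul_right (setLIntegral_le_lintegral _ _) _
  -- pointwise bound 3
  have hpt3 : ∀ x, ENNReal.ofReal ((vr x)^2) ≤ Bd x := by
    intro x
    set I := ∫⁻ y, H x y with hIdef
    have hIeq : I = ∫⁻ y in ball x r, ENNReal.ofReal |v y| := by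
      rw [hIdef, hHdef]
      exact lintegral_indicator measurableSet_ball _
    have hIL1 : I ≤ L1 := by
      rw [hIeq, hL1def]
      exact setLIntegral_le_lintegral _ _
    have hIt : I ≠ ⊤ := fun h => hL1t (top_le_iff.mp (h ▸ hIL1))
    have hnorm : |∫ y in ball x r, v y| ≤ I.toReal := by
      have h := norm_integral_le_lintegral_norm (μ := volume.restrict (ball x r)) v
      rw [hIeq]
      simpa [Real.norm_eq_abs] using h
    have habs : |vr x| ≤ I.toReal / μB.toReal := by
      rw [hvrdef]
      simp only [abs_div, abs_of_pos hV]
      exact div_le_div_of_nonneg_right hnorm hV.le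
    calc ENNReal.ofReal ((vr x)^2)
        = (ENNReal.ofReal |vr x|)^2 := by rw [← ENNReal.ofReal_pow (abs_nonneg _), sq_abs]
      _ ≤ (ENNReal.ofReal (I.toReal / μB.toReal))^2 :=
          pow_le_pow_left₀ zero_le (ENNReal.ofReal_le_ofReal habs) 2
      _ = (I / μB)^2 := by
          rw [ENNReal.ofReal_div_of_pos hV, ENNReal.ofReal_toReal hIt, ENNReal.ofReal_toReal hBt]
      _ ≤ (μB⁻¹ * L1) * (μB⁻¹ * I) := by
          rw [sq, div_eq_mul_inv]
          calc I * μB⁻¹ * (I * μB⁻¹) ≤ L1 * μB⁻¹ * (I * μB⁻¹) :=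
                mul_le_mul_left (mul_le_mul_left hIL1 _) _
            _ = (μB⁻¹ * L1) * (μB⁻¹ * I) := by ring
      _ = Bd x := by rw [hBddef]
  -- pointwise combination
  have hpt : ∀ x, ENNReal.ofReal ((v x)^2) ≤ 2 * A x + 2 * Bd x := by
    intro x
    have hreal : (v x)^2 ≤ 2*(v x - vr x)^2 + 2*(vr x)^2 := by
      nlinarith [sq_nonneg (v x - 2 * vr x)]
    calc ENNReal.ofReal ((v x)^2)
        ≤ ENNReal.ofReal (2*(v x - vr x)^2 + 2*(vr x)^2) := ENNReal.ofReal_le_ofReal hreal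
      _ = 2 * ENNReal.ofReal ((v x - vr x)^2) + 2 * ENNReal.ofReal ((vr x)^2) := by
          rw [ENNReal.ofReal_add (by positivity) (by positivity),
            ENNReal.ofReal_mul (by norm_num), ENNReal.ofReal_mul (by norm_num)]
          norm_num
      _ ≤ 2 * A x + 2 * Bd x := by
          gcongr
          exacts [hpt2 x, hpt3 x]
  -- integrate
  have hintA : ∫⁻ x, A x = μB⁻¹ * ENNReal.ofReal (r ^ p) * ∫⁻ x, ∫⁻ y, G x y := by
    rw [hAdef]
    exact lintegral_const_mul _ hGim
  have hswap : ∫⁻ x, ∫⁻ y, H x y = L1 * μB := by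
    rw [lintegral_lintegral_swap hHm.aemeasurable]
    have hinner : ∀ y : EuclideanSpace ℝ (Fin d), ∫⁻ x, H x y = ENNReal.ofReal |v y| * μB := by
      intro y
      have hxy : ∀ x : EuclideanSpace ℝ (Fin d),
          H x y = (ball y r).indicator (fun _ => ENNReal.ofReal |v y|) x := by
        intro x
        simp only [hHdef, Set.indicator, mem_ball, dist_comm y x]
      simp only [hxy]
      rw [lintegral_indicator measurableSet_ball, setLIntegral_const, hball y]
    simp only [hinner]
    rw [hL1def]
    exact lintegral_mul_const _ hm.abs.ennreal_ofReal
  have hintBd : ∫⁻ x, Bd x = μB⁻¹ * L1^2 := by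
    rw [hBddef]
    rw [lintegral_const_mul _ (hHim.const_mul _)]
    rw [lintegral_const_mul _ hHim]
    rw [hswap]
    rw [mul_comm L1 μB, ← mul_assoc μB⁻¹ μB L1, ENNReal.inv_mul_cancel hB0 hBt, one_mul, sq]
    ring
  refine le_trans (lintegral_mono hpt) ?_
  rw [lintegral_add_left (hAm.const_mul 2), lintegral_const_mul 2 hAm,
    lintegral_const_mul 2 hBdm, hintA, hintBd]



lemma eLpNorm_two_sq {X : Type*} [MeasurableSpace X] (μ : Measure X) (w : X → ℝ) :
    eLpNorm w 2 μ = (∫⁻ x, ENNReal.ofReal ((w x)^2) ∂μ) ^ (1/2:ℝ) := by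
  rw [eLpNorm_eq_lintegral_rpow_enorm_toReal two_ne_zero ENNReal.ofNat_ne_top]
  congr 1
  · apply lintegral_congr
    intro x
    rw [← ofReal_norm,
      ENNReal.ofReal_rpow_of_nonneg (norm_nonneg _) (by norm_num)]
    congr 1
    rw [Real.norm_eq_abs, show ((2:ℝ≥0∞).toReal) = ((2:ℕ):ℝ) from by norm_num,
      Real.rpow_natCast]
    exact sq_abs _

lemma eLpNorm_one_abs {X : Type*} [MeasurableSpace X] (μ : Measure X) (w : X → ℝ) :
    eLpNorm w 1 μ = ∫⁻ x, ENNReal.ofReal |w x| ∂μ := by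
  rw [eLpNorm_one_eq_lintegral_enorm]
  apply lintegral_congr
  intro x
  rw [← ofReal_norm, Real.norm_eq_abs]

lemma nash_rpow_calc (dr α e l : ℝ) (hdr : 0 < dr) (hα0 : 0 < α) (he : 0 < e) (hl : 0 < l) :
    ∃ r : ℝ, 0 < r ∧ r ^ (dr + α) = l^2/e ∧
      (r ^ α * e) ^ (1 + α/dr) = e * l ^ (2*α/dr) := by
  have hp : 0 < dr + α := by positivity
  have hq : (0:ℝ) < l^2/e := by positivity
  set q : ℝ := l^2/e with hqdef
  set r : ℝ := q ^ (dr+α)⁻¹ with hrdef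
  have hr : 0 < r := rpow_pos_of_pos hq _
  have hrp : r ^ (dr+α) = q := by
    rw [hrdef, ← Real.rpow_mul hq.le, inv_mul_cancel₀ hp.ne', Real.rpow_one]
  refine ⟨r, hr, hrp, ?_⟩
  set β : ℝ := 1 + α/dr with hβdef
  calc (r^α * e)^β = (r^α)^β * e^β := Real.mul_rpow (rpow_nonneg hr.le _) he.le
    _ = r^(α*β) * e^β := by rw [← Real.rpow_mul hr.le]
    _ = r^((dr+α)*(α/dr)) * e^β := by
        rw [show α*β = (dr+α)*(α/dr) from by rw [hβdef]; field_simp]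
    _ = (r^(dr+α))^(α/dr) * e^β := by rw [Real.rpow_mul hr.le]
    _ = (l^2)^(α/dr) / e^(α/dr) * e^β := by rw [hrp, hqdef, Real.div_rpow (by positivity) he.le]
    _ = l^(2*(α/dr)) / e^(α/dr) * e^β := by
        rw [← Real.rpow_natCast l 2, ← Real.rpow_mul hl.le]
        norm_num
    _ = l^(2*α/dr) * (e^β / e^(α/dr)) := by rw [show (2:ℝ)*(α/dr) = 2*α/dr from by ring]; ring
    _ = e * l^(2*α/dr) := by
        rw [← Real.rpow_sub he, show β - α/dr = 1 from by rw [hβdef]; ring, Real.rpow_one]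
        ring



theorem fractional_nash_inequality
    (d : ℕ) (hd : 1 ≤ d) (α : ℝ) (hα0 : 0 < α) (hα2 : α < 2) :
    ∃ C : ℝ, 0 < C ∧
      ∀ v : EuclideanSpace ℝ (Fin d) → ℝ,
        Integrable v → MemLp v 2 volume →
        eLpNorm v 2 volume ^ (2 * (1 + α / d)) ≤
          ENNReal.ofReal C *
            (∫⁻ x : EuclideanSpace ℝ (Fin d), ∫⁻ y : EuclideanSpace ℝ (Fin d),
              ENNReal.ofReal ((v x - v y) ^ 2 / ‖x - y‖ ^ ((d : ℝ) + α))) *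
            eLpNorm v 1 volume ^ (2 * α / d) := by
  haveI := euclid_nontrivial d hd
  have hd0 : (0:ℝ) < d := by exact_mod_cast hd
  set u := volume (ball (0 : EuclideanSpace ℝ (Fin d)) 1) with hudef
  have hu0 : u ≠ 0 := (measure_ball_pos volume _ one_pos).ne'
  have hut : u ≠ ⊤ := measure_ball_lt_top.ne
  set ω : ℝ := u.toReal with hωdef
  have hω : 0 < ω := ENNReal.toReal_pos hu0 hut
  set β : ℝ := 1 + α/(d:ℝ) with hβdef
  have hβ0 : 0 < β := by positivity
  refine ⟨(4/ω)^β, by positivity, ?_⟩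
  intro v hv hv2
  -- measurable representative
  obtain ⟨w, hwm, hvw⟩ : ∃ w, Measurable w ∧ v =ᵐ[volume] w := by
    have hsm := hv.aestronglyMeasurable
    exact ⟨hsm.mk v, hsm.stronglyMeasurable_mk.measurable, hsm.ae_eq_mk⟩
  have hw_int : Integrable w := hv.congr hvw
  have heq2 : eLpNorm v 2 volume = eLpNorm w 2 volume := eLpNorm_congr_ae hvw
  have heq1 : eLpNorm v 1 volume = eLpNorm w 1 volume := eLpNorm_congr_ae hvw
  have heqE : (∫⁻ x : EuclideanSpace ℝ (Fin d), ∫⁻ y : EuclideanSpace ℝ (Fin d),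
        ENNReal.ofReal ((v x - v y) ^ 2 / ‖x - y‖ ^ ((d : ℝ) + α)))
      = ∫⁻ x : EuclideanSpace ℝ (Fin d), ∫⁻ y : EuclideanSpace ℝ (Fin d),
        ENNReal.ofReal ((w x - w y) ^ 2 / ‖x - y‖ ^ ((d : ℝ) + α)) := by
    apply lintegral_congr_ae
    filter_upwards [hvw] with x hx
    apply lintegral_congr_ae
    filter_upwards [hvw] with y hy
    rw [hx, hy]
  rw [heq2, heq1, heqE]
  set Eint := ∫⁻ x : EuclideanSpace ℝ (Fin d), ∫⁻ y : EuclideanSpace ℝ (Fin d),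
    ENNReal.ofReal ((w x - w y) ^ 2 / ‖x - y‖ ^ ((d : ℝ) + α)) with hEdef
  set N2sq := ∫⁻ x, ENNReal.ofReal ((w x)^2) with hNdef
  set L1 := ∫⁻ x, ENNReal.ofReal |w x| with hL1def
  have hL1e : eLpNorm w 1 volume = L1 := eLpNorm_one_abs volume w
  have h2e : eLpNorm w 2 volume = N2sq ^ (1/2:ℝ) := eLpNorm_two_sq volume w
  have hLHS : eLpNorm w 2 volume ^ (2 * (1 + α / (d:ℝ))) = N2sq ^ β := by
    rw [h2e, ← ENNReal.rpow_mul, hβdef]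
    congr 1
    ring
  rw [hLHS, hL1e]
  have hN2t : N2sq ≠ ⊤ := by
    have hlt := hv2.eLpNorm_lt_top
    rw [heq2, h2e] at hlt
    intro h
    rw [h, ENNReal.top_rpow_of_pos (by norm_num)] at hlt
    exact lt_irrefl _ hlt
  have hL1t : L1 ≠ ⊤ := by
    have h2 : (∫⁻ x, (‖w x‖₊ : ℝ≥0∞)) < ⊤ := hw_int.2
    have he : ∀ x, ENNReal.ofReal |w x| = (‖w x‖₊ : ℝ≥0∞) :=
      fun x => by rw [← enorm_eq_nnnorm, ← ofReal_norm, Real.norm_eq_abs]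
    rw [hL1def]
    simp only [he]
    exact h2.ne
  by_cases hL10 : L1 = 0
  · have hw0 : w =ᵐ[volume] 0 := by
      rw [← eLpNorm_eq_zero_iff hw_int.aestronglyMeasurable one_ne_zero, hL1e]
      exact hL10
    have hN0 : N2sq = 0 := by
      rw [hNdef, ← lintegral_zero]
      apply lintegral_congr_ae
      filter_upwards [hw0] with x hx
      simp [hx]
    rw [hN0, ENNReal.zero_rpow_of_pos hβ0]
    exact zero_le
  by_cases hEt : Eint = ⊤
  · rw [hEt, ENNReal.mul_top (by
      simp only [ne_eq, ENNReal.ofReal_eq_zero, not_le]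
      positivity), ENNReal.top_mul (by
      simp only [ne_eq, ENNReal.rpow_eq_zero_iff, not_or]
      constructor
      · rintro ⟨h, -⟩; exact hL10 h
      · rintro ⟨h, -⟩; exact hL1t h)]
    exact le_top
  -- rewrite ball volumes
  have hball : ∀ r : ℝ, 0 < r →
      volume (ball (0 : EuclideanSpace ℝ (Fin d)) r) = ENNReal.ofReal (r ^ d) * u := by
    intro r hr
    rw [Measure.addHaar_ball volume _ hr.le, finrank_euclideanSpace_fin]
  by_cases hE0 : Eint = 0
  · -- use r = n+1 → ∞
    have hN0 : N2sq = 0 := by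
      by_contra hN0
      have hNpos : 0 < N2sq.toReal := ENNReal.toReal_pos hN0 hN2t
      set K : ℝ≥0∞ := 2 * (u⁻¹ * L1^2) with hKdef
      have hKt : K ≠ ⊤ := by
        apply ENNReal.mul_ne_top (by norm_num)
        exact ENNReal.mul_ne_top (ENNReal.inv_ne_top.mpr hu0)
          (ENNReal.pow_ne_top hL1t)
      have hb : ∀ n : ℕ, N2sq ≤ K * (ENNReal.ofReal (n+1))⁻¹ := by
        intro n
        have hrpos : (0:ℝ) < (n:ℝ)+1 := by positivity
        have hstep := nash_step d hd α hα0 w hwm hw_int hrpos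
        rw [← hEdef, ← hNdef, ← hL1def, hE0, mul_zero, mul_zero, zero_add] at hstep
        rw [hball _ hrpos] at hstep
        refine hstep.trans ?_
        have hminv : (ENNReal.ofReal (((n:ℝ)+1) ^ d) * u)⁻¹
            = (ENNReal.ofReal (((n:ℝ)+1) ^ d))⁻¹ * u⁻¹ := by
          rw [ENNReal.mul_inv (Or.inr hut) (Or.inr hu0)]
        rw [hminv]
        have hle : (ENNReal.ofReal (((n:ℝ)+1) ^ d))⁻¹ ≤ (ENNReal.ofReal ((n:ℝ)+1))⁻¹ := by
          apply ENNReal.inv_le_inv'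
          apply ENNReal.ofReal_le_ofReal
          exact le_self_pow₀ (by linarith) (by omega)
        calc 2 * ((ENNReal.ofReal (((n:ℝ)+1) ^ d))⁻¹ * u⁻¹ * L1^2)
            ≤ 2 * ((ENNReal.ofReal ((n:ℝ)+1))⁻¹ * u⁻¹ * L1^2) := by
              gcongr
          _ = K * (ENNReal.ofReal ((n:ℝ)+1))⁻¹ := by rw [hKdef]; ring
      obtain ⟨n, hn⟩ := exists_nat_gt (K.toReal / N2sq.toReal)
      have hb' := hb n
      have hofr : ENNReal.ofReal ((n:ℝ)+1) ≠ 0 := by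
        simp only [ne_eq, ENNReal.ofReal_eq_zero, not_le]; positivity
      have hofrt : ENNReal.ofReal ((n:ℝ)+1) ≠ ⊤ := ENNReal.ofReal_ne_top
      have hmul := mul_le_mul_left hb' (ENNReal.ofReal ((n:ℝ)+1))
      rw [mul_assoc, ENNReal.inv_mul_cancel hofr hofrt, mul_one] at hmul
      have htr := ENNReal.toReal_mono hKt hmul
      rw [ENNReal.toReal_mul, ENNReal.toReal_ofReal (by positivity)] at htr
      have : (n:ℝ)+1 ≤ K.toReal / N2sq.toReal := by
        rw [le_div_iff₀ hNpos]
        linarith [htr]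
      linarith
    rw [hN0, ENNReal.zero_rpow_of_pos hβ0]
    exact zero_le
  -- main case
  set e : ℝ := Eint.toReal with hedef
  set l : ℝ := L1.toReal with hldef
  have he : 0 < e := ENNReal.toReal_pos hE0 hEt
  have hl : 0 < l := ENNReal.toReal_pos hL10 hL1t
  obtain ⟨r, hr, hrp, hrcalc⟩ := nash_rpow_calc (d:ℝ) α e l hd0 hα0 he hl
  have hstep := nash_step d hd α hα0 w hwm hw_int hr
  rw [← hEdef, ← hNdef, ← hL1def, hball r hr] at hstep
  -- convert everything to ofReal
  have hEor : Eint = ENNReal.ofReal e := (ENNReal.ofReal_toReal hEt).symm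
  have hL1or : L1 = ENNReal.ofReal l := (ENNReal.ofReal_toReal hL1t).symm
  have huor : u = ENNReal.ofReal ω := (ENNReal.ofReal_toReal hut).symm
  have hkey : N2sq ≤ ENNReal.ofReal (4/ω * (r^α * e)) := by
    refine hstep.trans (le_of_eq ?_)
    rw [hEor, hL1or, huor]
    rw [← ENNReal.ofReal_pow hl.le]
    rw [← ENNReal.ofReal_mul (by positivity), ← ENNReal.ofReal_inv_of_pos (by positivity)]
    rw [← ENNReal.ofReal_mul (by positivity), ← ENNReal.ofReal_mul (by positivity),
      ← ENNReal.ofReal_mul (by positivity)]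
    have h2or : ∀ a : ℝ, 0 ≤ a → (2:ℝ≥0∞) * ENNReal.ofReal a = ENNReal.ofReal (2*a) := by
      intro a ha
      rw [ENNReal.ofReal_mul (by norm_num : (0:ℝ) ≤ 2)]
      norm_num
    rw [h2or _ (by positivity), h2or _ (by positivity),
      ← ENNReal.ofReal_add (by positivity) (by positivity)]
    congr 1
    have hl2 : l^2 = r ^ ((d:ℝ)+α) * e := by
      rw [hrp]; field_simp
    have hrdn : r ^ d = r ^ ((d:ℝ)) := (Real.rpow_natCast r d).symm
    have hrsplit : r ^ ((d:ℝ)+α) = r ^ ((d:ℝ)) * r ^ α := Real.rpow_add hr _ _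
    rw [hl2, hrdn, hrsplit]
    have hrd0 : r ^ ((d:ℝ)) ≠ 0 := (rpow_pos_of_pos hr _).ne'
    field_simp
    ring
  calc N2sq ^ β ≤ (ENNReal.ofReal (4/ω * (r^α * e))) ^ β := by
        exact ENNReal.rpow_le_rpow hkey hβ0.le
    _ = ENNReal.ofReal ((4/ω)^β * (e * l ^ (2*α/(d:ℝ)))) := by
        rw [ENNReal.ofReal_rpow_of_nonneg (by positivity) hβ0.le]
        congr 1
        rw [Real.mul_rpow (by positivity) (by positivity), hrcalc, hβdef]
    _ = ENNReal.ofReal ((4/ω)^β) * Eint * L1 ^ (2*α/(d:ℝ)) := by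
        rw [hEor, hL1or, ENNReal.ofReal_rpow_of_nonneg hl.le (by positivity),
          ← ENNReal.ofReal_mul (by positivity), ← ENNReal.ofReal_mul (by positivity)]
        congr 1
        ring
end

section
/- (Stroock–Varopoulos inequality, bilinear form.) Let d ≥ 1 be an integer, α ∈ (0,2), and q > 1. For r ∈ ℝ write T(r) = sgn(r)|r|^{q-1} and S(r) = sgn(r)|r|^{q/2}. Then for every measurable function w : ℝ^d → ℝ the following inequalities between values in [0,∞] hold (all integrands on the left being nonnegative): ∬_{ℝ^d×ℝ^d} (w(x)-w(y)) (T(w(x))-T(w(y))) / |x-y|^{d+α} dx dy ≥ (4(q-1)/q²) ∬_{ℝ^d×ℝ^d} (S(w(x))-S(w(y)))² / |x-y|^{d+α} dx dy ≥ (4(q-1)/q²) ∬_{ℝ^d×ℝ^d} ( |w(x)|^{q/2} - |w(y)|^{q/2} )² / |x-y|^{d+α} dx dy. -/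
open MeasureTheory Real
open scoped ENNReal

-- Cauchy–Schwarz for power integrals
lemma sv_cs_rpow {y x r : ℝ} (hy : 0 ≤ y) (hxy : y ≤ x) (hr : -1 < r) (h2r : -1 < 2*r) :
    (∫ t in y..x, t ^ r) ^ 2 ≤ (x - y) * ∫ t in y..x, t ^ (2*r) := by
  have hsub : Set.Ioc y x ⊆ Set.Ioi (0:ℝ) := fun t ht => lt_of_le_of_lt hy ht.1
  set μ := volume.restrict (Set.Ioc y x) with hμ
  have hmeas : ∀ s : ℝ, AEMeasurable (fun t => ENNReal.ofReal (t ^ s)) μ := by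
    intro s
    refine AEMeasurable.congr (f := fun t : ℝ => ENNReal.ofReal (Real.exp (Real.log t * s)))
      (((Real.measurable_log.mul measurable_const).exp.ennreal_ofReal).aemeasurable) ?_
    filter_upwards [ae_restrict_mem measurableSet_Ioc] with t ht
    rw [(Real.rpow_def_of_pos (hsub ht) s)]
  have hint : ∀ s : ℝ, -1 < s → IntegrableOn (fun t => t ^ s) (Set.Ioc y x) :=
    fun s hs => (intervalIntegral.intervalIntegrable_rpow' hs (a := y) (b := x)).1
  have hnn : ∀ s : ℝ, 0 ≤ᵐ[μ] fun t => t ^ s := by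
    intro s
    filter_upwards [ae_restrict_mem measurableSet_Ioc] with t ht
    exact Real.rpow_nonneg (le_of_lt (hsub ht)) s
  have h1 : ENNReal.ofReal (∫ t in y..x, t ^ r) = ∫⁻ t, ENNReal.ofReal (t ^ r) ∂μ := by
    rw [intervalIntegral.integral_of_le hxy]
    exact MeasureTheory.ofReal_integral_eq_lintegral_ofReal (hint r hr) (hnn r)
  have h2 : ENNReal.ofReal (∫ t in y..x, t ^ (2*r)) =
      ∫⁻ t, ENNReal.ofReal (t ^ (2*r)) ∂μ := by
    rw [intervalIntegral.integral_of_le hxy]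
    exact MeasureTheory.ofReal_integral_eq_lintegral_ofReal (hint _ h2r) (hnn _)
  have hconj : Real.HolderConjugate 2 2 := Real.HolderConjugate.two_two
  have hCS := ENNReal.lintegral_mul_le_Lp_mul_Lq μ hconj (hmeas r)
    (aemeasurable_const (b := (1:ℝ≥0∞)))
  simp only [Pi.mul_apply, mul_one, ENNReal.one_rpow, lintegral_const, one_mul] at hCS
  have hsq : ∀ᵐ t ∂μ, ENNReal.ofReal (t ^ r) ^ (2:ℝ) = ENNReal.ofReal (t ^ (2*r)) := by
    filter_upwards [ae_restrict_mem measurableSet_Ioc] with t ht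
    have ht0 : 0 ≤ t := le_of_lt (hsub ht)
    rw [ENNReal.ofReal_rpow_of_nonneg (Real.rpow_nonneg ht0 r) (by norm_num : (0:ℝ) ≤ 2),
      ← Real.rpow_mul ht0, mul_comm r 2]
  have hμuniv : μ Set.univ = ENNReal.ofReal (x - y) := by
    rw [hμ, Measure.restrict_apply_univ, Real.volume_Ioc]
  rw [lintegral_congr_ae hsq, hμuniv] at hCS
  -- square both sides
  have hCS2 : (∫⁻ t, ENNReal.ofReal (t ^ r) ∂μ) ^ (2:ℕ) ≤
      (∫⁻ t, ENNReal.ofReal (t ^ (2*r)) ∂μ) * ENNReal.ofReal (x - y) := by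
    calc (∫⁻ t, ENNReal.ofReal (t ^ r) ∂μ) ^ (2:ℕ)
        ≤ ((∫⁻ t, ENNReal.ofReal (t ^ (2*r)) ∂μ) ^ (1/2:ℝ) *
            (ENNReal.ofReal (x - y)) ^ (1/2:ℝ)) ^ (2:ℕ) := pow_le_pow_left' hCS 2
      _ = (∫⁻ t, ENNReal.ofReal (t ^ (2*r)) ∂μ) * ENNReal.ofReal (x - y) := by
          rw [mul_pow, ← ENNReal.rpow_natCast (_ ^ (1/2:ℝ)), ← ENNReal.rpow_natCast ((ENNReal.ofReal (x-y)) ^ (1/2:ℝ)), ← ENNReal.rpow_mul, ← ENNReal.rpow_mul]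
          norm_num
  have hI1 : 0 ≤ ∫ t in y..x, t ^ r := by
    apply intervalIntegral.integral_nonneg hxy
    intro t ht
    exact Real.rpow_nonneg (le_trans hy ht.1) r
  have hI2 : 0 ≤ ∫ t in y..x, t ^ (2*r) := by
    apply intervalIntegral.integral_nonneg hxy
    intro t ht
    exact Real.rpow_nonneg (le_trans hy ht.1) _
  rw [← h1, ← h2, ← ENNReal.ofReal_pow hI1, ← ENNReal.ofReal_mul hI2] at hCS2
  have := (ENNReal.ofReal_le_ofReal_iff (mul_nonneg hI2 (by linarith))).1 hCS2
  linarith [this]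

lemma sv_caseB {q : ℝ} (hq : 1 < q) {y x : ℝ} (hy : 0 ≤ y) (hxy : y ≤ x) :
    4*(q-1)/q^2 * (x ^ (q/2) - y ^ (q/2))^2 ≤ (x - y) * (x ^ (q-1) - y ^ (q-1)) := by
  have hq0 : 0 < q := by linarith
  set r : ℝ := (q-2)/2 with hrdef
  have hr : -1 < r := by rw [hrdef]; linarith
  have h2r : -1 < 2*r := by rw [hrdef]; linarith
  have hI := sv_cs_rpow hy hxy hr h2r
  have e1 : x ^ (q/2) - y ^ (q/2) = (q/2) * ∫ t in y..x, t ^ r := by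
    rw [integral_rpow (Or.inl hr)]
    have hr1 : r + 1 = q/2 := by rw [hrdef]; ring
    rw [hr1, mul_comm, div_mul_cancel₀ _ (by positivity : (q/2:ℝ) ≠ 0)]
  have e2 : x ^ (q-1) - y ^ (q-1) = (q-1) * ∫ t in y..x, t ^ (2*r) := by
    rw [integral_rpow (Or.inl h2r)]
    have hr1 : 2*r + 1 = q-1 := by rw [hrdef]; ring
    rw [hr1, mul_comm, div_mul_cancel₀ _ (ne_of_gt (by linarith : (0:ℝ) < q - 1))]
  rw [e1, e2]
  have hc : 4*(q-1)/q^2 * ((q/2) * ∫ t in y..x, t ^ r)^2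
      = (q-1) * (∫ t in y..x, t ^ r)^2 := by
    field_simp
    ring
  rw [hc]
  have := mul_le_mul_of_nonneg_left hI (by linarith : (0:ℝ) ≤ q - 1)
  linarith [this]

lemma sv_rpow_succ {x : ℝ} (hx : 0 ≤ x) {c : ℝ} (hc : c + 1 ≠ 0) :
    x * x ^ c = x ^ (c + 1) := by
  rcases hx.eq_or_lt with h | h
  · rw [← h, Real.zero_rpow hc]
    simp
  · rw [Real.rpow_add h, Real.rpow_one]
    ring

lemma sv_caseA {q : ℝ} (hq : 1 < q) {x y : ℝ} (hx : 0 ≤ x) (hy : 0 ≤ y) :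
    4*(q-1)/q^2 * (x ^ (q/2) + y ^ (q/2))^2 ≤ (x + y) * (x ^ (q-1) + y ^ (q-1)) := by
  have hq0 : 0 < q := by linarith
  set u : ℝ := x ^ (1/2:ℝ) * y ^ ((q-1)/2) with hu
  set v : ℝ := x ^ ((q-1)/2) * y ^ (1/2:ℝ) with hv
  have hsq : ∀ z : ℝ, 0 ≤ z → ∀ c : ℝ, (z ^ c)^2 = z ^ (2*c) := by
    intro z hz c
    rw [← Real.rpow_natCast (z ^ c) 2, ← Real.rpow_mul hz]
    norm_num [mul_comm]
  have hhalf : ∀ z : ℝ, 0 ≤ z → z ^ (1/2:ℝ) * z ^ ((q-1)/2) = z ^ (q/2) := by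
    intro z hz
    rw [← Real.rpow_add' hz (by rw [show (1/2:ℝ) + (q-1)/2 = q/2 by ring]; positivity),
      show (1/2:ℝ) + (q-1)/2 = q/2 by ring]
  have hu2 : u^2 = x * y ^ (q-1) := by
    rw [hu, mul_pow, hsq x hx, hsq y hy, show 2*(1/2:ℝ) = 1 by ring,
      show 2*((q-1)/2) = q-1 by ring, Real.rpow_one]
  have hv2 : v^2 = x ^ (q-1) * y := by
    rw [hv, mul_pow, hsq x hx, hsq y hy, show 2*(1/2:ℝ) = 1 by ring,
      show 2*((q-1)/2) = q-1 by ring, Real.rpow_one]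
  have huv : u * v = x ^ (q/2) * y ^ (q/2) := by
    rw [hu, hv, mul_mul_mul_comm, hhalf x hx, mul_comm (y ^ ((q-1)/2)), hhalf y hy]
  have h2uv : 2 * (x ^ (q/2) * y ^ (q/2)) ≤ x * y ^ (q-1) + x ^ (q-1) * y := by
    calc 2 * (x ^ (q/2) * y ^ (q/2)) = 2 * u * v := by rw [← huv]; ring
      _ ≤ u^2 + v^2 := two_mul_le_add_sq u v
      _ = x * y ^ (q-1) + x ^ (q-1) * y := by rw [hu2, hv2]
  have hxq : x * x ^ (q-1) = x ^ q := by
    rw [sv_rpow_succ hx (c := q-1) (by rw [show q-1+1 = q by ring]; exact hq0.ne'),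
      show q-1+1 = q by ring]
  have hyq : y * y ^ (q-1) = y ^ q := by
    rw [sv_rpow_succ hy (c := q-1) (by rw [show q-1+1 = q by ring]; exact hq0.ne'),
      show q-1+1 = q by ring]
  have hx2 : (x ^ (q/2))^2 = x ^ q := by rw [hsq x hx, show 2*(q/2) = q by ring]
  have hy2 : (y ^ (q/2))^2 = y ^ q := by rw [hsq y hy, show 2*(q/2) = q by ring]
  have hexpand : (x ^ (q/2) + y ^ (q/2))^2 ≤ (x + y) * (x ^ (q-1) + y ^ (q-1)) := by
    nlinarith [h2uv, hxq, hyq, hx2, hy2]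
  have hc1 : 4*(q-1)/q^2 ≤ 1 := by
    rw [div_le_one (by positivity)]
    nlinarith [sq_nonneg (q-2)]
  calc 4*(q-1)/q^2 * (x ^ (q/2) + y ^ (q/2))^2
      ≤ 1 * (x ^ (q/2) + y ^ (q/2))^2 := mul_le_mul_of_nonneg_right hc1 (sq_nonneg _)
    _ = (x ^ (q/2) + y ^ (q/2))^2 := one_mul _
    _ ≤ (x + y) * (x ^ (q-1) + y ^ (q-1)) := hexpand

lemma sv_sign_nonneg {r c : ℝ} (hr : 0 ≤ r) (hc : c ≠ 0) :
    Real.sign r * |r| ^ c = r ^ c := by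
  rcases hr.eq_or_lt with h | h
  · rw [← h]
    simp [Real.sign_zero, Real.zero_rpow hc]
  · rw [Real.sign_of_pos h, abs_of_pos h, one_mul]

lemma sv_sign_nonpos {r c : ℝ} (hr : r ≤ 0) (hc : c ≠ 0) :
    Real.sign r * |r| ^ c = -((-r) ^ c) := by
  rcases hr.eq_or_lt with h | h
  · rw [h]
    simp [Real.sign_zero, Real.zero_rpow hc]
  · rw [Real.sign_of_neg h, abs_of_neg h]
    ring

-- the main pointwise inequality
lemma sv_key_ge {q : ℝ} (hq : 1 < q) {a b : ℝ} (hba : b ≤ a) :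
    4*(q-1)/q^2 * (Real.sign a * |a| ^ (q/2) - Real.sign b * |b| ^ (q/2))^2
      ≤ (a - b) * (Real.sign a * |a| ^ (q-1) - Real.sign b * |b| ^ (q-1)) := by
  have hq2 : (q/2 : ℝ) ≠ 0 := by positivity
  have hq1 : (q-1 : ℝ) ≠ 0 := ne_of_gt (by linarith)
  rcases le_or_gt 0 b with hb | hb
  · -- 0 ≤ b ≤ a
    rw [sv_sign_nonneg hb hq2, sv_sign_nonneg (hb.trans hba) hq2,
      sv_sign_nonneg hb hq1, sv_sign_nonneg (hb.trans hba) hq1]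
    exact sv_caseB hq hb hba
  · rcases le_or_gt a 0 with ha | ha
    · -- b < a ≤ 0
      rw [sv_sign_nonpos ha hq2, sv_sign_nonpos hb.le hq2,
        sv_sign_nonpos ha hq1, sv_sign_nonpos hb.le hq1]
      have h := sv_caseB hq (neg_nonneg.2 ha) (neg_le_neg hba)
      calc 4*(q-1)/q^2 * (-((-a) ^ (q/2)) - -((-b) ^ (q/2)))^2
          = 4*(q-1)/q^2 * ((-b) ^ (q/2) - (-a) ^ (q/2))^2 := by ring
        _ ≤ (-b - -a) * ((-b) ^ (q-1) - (-a) ^ (q-1)) := h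
        _ = (a - b) * (-((-a) ^ (q-1)) - -((-b) ^ (q-1))) := by ring
    · -- b < 0 < a
      rw [sv_sign_nonneg ha.le hq2, sv_sign_nonpos hb.le hq2,
        sv_sign_nonneg ha.le hq1, sv_sign_nonpos hb.le hq1]
      have h := sv_caseA hq ha.le (neg_nonneg.2 hb.le) (x := a) (y := -b)
      calc 4*(q-1)/q^2 * (a ^ (q/2) - -((-b) ^ (q/2)))^2
          = 4*(q-1)/q^2 * (a ^ (q/2) + (-b) ^ (q/2))^2 := by ring
        _ ≤ (a + -b) * (a ^ (q-1) + (-b) ^ (q-1)) := h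
        _ = (a - b) * (a ^ (q-1) - -((-b) ^ (q-1))) := by ring

lemma sv_key {q : ℝ} (hq : 1 < q) (a b : ℝ) :
    4*(q-1)/q^2 * (Real.sign a * |a| ^ (q/2) - Real.sign b * |b| ^ (q/2))^2
      ≤ (a - b) * (Real.sign a * |a| ^ (q-1) - Real.sign b * |b| ^ (q-1)) := by
  rcases le_total b a with h | h
  · exact sv_key_ge hq h
  · have := sv_key_ge hq h
    calc 4*(q-1)/q^2 * (Real.sign a * |a| ^ (q/2) - Real.sign b * |b| ^ (q/2))^2
        = 4*(q-1)/q^2 * (Real.sign b * |b| ^ (q/2) - Real.sign a * |a| ^ (q/2))^2 := by ring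
      _ ≤ (b - a) * (Real.sign b * |b| ^ (q-1) - Real.sign a * |a| ^ (q-1)) := this
      _ = (a - b) * (Real.sign a * |a| ^ (q-1) - Real.sign b * |b| ^ (q-1)) := by ring

lemma sv_abs_sign {q : ℝ} (hq : 1 < q) (r : ℝ) :
    |Real.sign r * |r| ^ (q/2)| = |r| ^ (q/2) := by
  rcases lt_trichotomy r 0 with h | h | h
  · rw [Real.sign_of_neg h, abs_mul, abs_of_nonneg (Real.rpow_nonneg (abs_nonneg r) (q/2))]
    norm_num
  · rw [h]
    simp [Real.sign_zero, Real.zero_rpow (by positivity : (q/2:ℝ) ≠ 0)]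
  · rw [Real.sign_of_pos h, one_mul]
    exact abs_of_nonneg (Real.rpow_nonneg (abs_nonneg r) (q/2))

lemma sv_key2 {q : ℝ} (hq : 1 < q) (a b : ℝ) :
    (|a| ^ (q/2) - |b| ^ (q/2))^2
      ≤ (Real.sign a * |a| ^ (q/2) - Real.sign b * |b| ^ (q/2))^2 := by
  set u := Real.sign a * |a| ^ (q/2) with hu
  set v := Real.sign b * |b| ^ (q/2) with hv
  have h1 : |a| ^ (q/2) = |u| := (sv_abs_sign hq a).symm
  have h2 : |b| ^ (q/2) = |v| := (sv_abs_sign hq b).symm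
  rw [h1, h2]
  calc (|u| - |v|)^2 = |(|u| - |v|)|^2 := (sq_abs _).symm
    _ ≤ |u - v|^2 := pow_le_pow_left₀ (abs_nonneg _) (abs_abs_sub_abs_le_abs_sub u v) 2
    _ = (u - v)^2 := sq_abs _

lemma sv_div_mono {s t D : ℝ} (h : s ≤ t) (hD : 0 ≤ D) : s / D ≤ t / D := by
  rcases hD.eq_or_lt with h0 | h0
  · rw [← h0, div_zero, div_zero]
  · exact div_le_div_of_nonneg_right h h0.le

theorem stroock_varopoulos_bilinear
    (d : ℕ) (hd : 1 ≤ d) (α q : ℝ) (hα0 : 0 < α) (hα2 : α < 2) (hq : 1 < q)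
    (T S : ℝ → ℝ)
    (hT : T = fun r => Real.sign r * |r| ^ (q - 1))
    (hS : S = fun r => Real.sign r * |r| ^ (q / 2))
    (w : EuclideanSpace ℝ (Fin d) → ℝ) (hw : Measurable w) :
    (∫⁻ x : EuclideanSpace ℝ (Fin d), ∫⁻ y : EuclideanSpace ℝ (Fin d),
        ENNReal.ofReal ((w x - w y) * (T (w x) - T (w y)) / ‖x - y‖ ^ ((d : ℝ) + α))) ≥
      ENNReal.ofReal (4 * (q - 1) / q ^ 2) *
        ∫⁻ x : EuclideanSpace ℝ (Fin d), ∫⁻ y : EuclideanSpace ℝ (Fin d),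
          ENNReal.ofReal ((S (w x) - S (w y)) ^ 2 / ‖x - y‖ ^ ((d : ℝ) + α)) ∧
    (ENNReal.ofReal (4 * (q - 1) / q ^ 2) *
        ∫⁻ x : EuclideanSpace ℝ (Fin d), ∫⁻ y : EuclideanSpace ℝ (Fin d),
          ENNReal.ofReal ((S (w x) - S (w y)) ^ 2 / ‖x - y‖ ^ ((d : ℝ) + α))) ≥
      ENNReal.ofReal (4 * (q - 1) / q ^ 2) *
        ∫⁻ x : EuclideanSpace ℝ (Fin d), ∫⁻ y : EuclideanSpace ℝ (Fin d),
          ENNReal.ofReal ((|w x| ^ (q / 2) - |w y| ^ (q / 2)) ^ 2 /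
            ‖x - y‖ ^ ((d : ℝ) + α)) := by
  subst hT hS
  have hc0 : (0:ℝ) ≤ 4 * (q - 1) / q ^ 2 := div_nonneg (by linarith) (by positivity)
  have hDnn : ∀ x y : EuclideanSpace ℝ (Fin d), 0 ≤ ‖x - y‖ ^ ((d:ℝ) + α) :=
    fun x y => Real.rpow_nonneg (norm_nonneg _) _
  constructor
  · rw [ge_iff_le, ← lintegral_const_mul' _ _ ENNReal.ofReal_ne_top]
    refine lintegral_mono fun x => ?_
    rw [← lintegral_const_mul' _ _ ENNReal.ofReal_ne_top]
    refine lintegral_mono fun y => ?_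
    rw [← ENNReal.ofReal_mul hc0]
    apply ENNReal.ofReal_le_ofReal
    rw [← mul_div_assoc]
    have h := sv_key hq (w x) (w y)
    have h' : 4 * (q - 1) / q ^ 2 * (Real.sign (w x) * |w x| ^ (q/2)
        - Real.sign (w y) * |w y| ^ (q/2))^2
        ≤ (w x - w y) * (Real.sign (w x) * |w x| ^ (q-1)
          - Real.sign (w y) * |w y| ^ (q-1)) := by
      calc 4 * (q - 1) / q ^ 2 * (Real.sign (w x) * |w x| ^ (q/2)
          - Real.sign (w y) * |w y| ^ (q/2))^2
          = 4*(q-1)/q^2 * (Real.sign (w x) * |w x| ^ (q/2)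
            - Real.sign (w y) * |w y| ^ (q/2))^2 := by ring
        _ ≤ _ := h
    exact sv_div_mono h' (hDnn x y)
  · rw [ge_iff_le]
    refine mul_le_mul_right ?_ _
    refine lintegral_mono fun x => lintegral_mono fun y => ?_
    exact ENNReal.ofReal_le_ofReal (sv_div_mono (sv_key2 hq (w x) (w y)) (hDnn x y))
end

section
/- (Pointwise convexity inequality for the fractional Laplacian.) Let d ≥ 1 be an integer and α ∈ (0,2). Let φ : ℝ → ℝ be convex and twice continuously differentiable, and let w : ℝ^d → ℝ be smooth and compactly supported. Then for every x ∈ ℝ^d, the two integrals ∫_{ℝ^d} (2φ(w(x)) - φ(w(x+z)) - φ(w(x-z))) / |z|^{d+α} dz and ∫_{ℝ^d} (2w(x) - w(x+z) - w(x-z)) / |z|^{d+α} dz converge absolutely, and ∫_{ℝ^d} (2φ(w(x)) - φ(w(x+z)) - φ(w(x-z))) / |z|^{d+α} dz ≤ φ'(w(x)) · ∫_{ℝ^d} (2w(x) - w(x+z) - w(x-z)) / |z|^{d+α} dz. -/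
open MeasureTheory Real Set Metric

/-- Integrability of `‖z‖ ^ t` on the unit ball in `ℝ^d` for `t > -d`. -/
private lemma ball_rpow_integrable {d : ℕ} (hd : 1 ≤ d) {t : ℝ} (ht : -(d : ℝ) < t) :
    IntegrableOn (fun z : EuclideanSpace ℝ (Fin d) => ‖z‖ ^ t)
      (Metric.ball 0 1) volume := by
  have hmeas : Measurable fun z : EuclideanSpace ℝ (Fin d) => ‖z‖ ^ t :=
    measurable_norm.pow_const t
  rcases le_or_gt 0 t with h0 | h0
  · have hconst : IntegrableOn (fun _ : EuclideanSpace ℝ (Fin d) => (1 : ℝ))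
        (Metric.ball 0 1) volume :=
      integrableOn_const measure_ball_lt_top.ne
    refine hconst.mono' hmeas.aestronglyMeasurable ?_
    filter_upwards [ae_restrict_mem measurableSet_ball] with z hz
    rw [Real.norm_eq_abs, abs_of_nonneg (Real.rpow_nonneg (norm_nonneg z) t)]
    exact Real.rpow_le_one (norm_nonneg z) (mem_ball_zero_iff.mp hz).le h0
  · set s : ℝ := -t with hs_def
    have hs0 : 0 < s := by simp [hs_def]; linarith
    have hsd : s < d := by simp [hs_def]; linarith
    have ht_eq : t = -s := by simp [hs_def]
    refine ⟨hmeas.aestronglyMeasurable, ?_⟩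
    have hnn : ∀ z : EuclideanSpace ℝ (Fin d), 0 ≤ ‖z‖ ^ t := fun z =>
      Real.rpow_nonneg (norm_nonneg z) t
    rw [HasFiniteIntegral, lintegral_enorm_of_nonneg hnn,
      lintegral_eq_lintegral_meas_le _ (ae_of_all _ hnn) hmeas.aemeasurable]
    set ν := volume.restrict (Metric.ball (0 : EuclideanSpace ℝ (Fin d)) 1) with hν
    have hIoc : (∫⁻ u in Ioc (0 : ℝ) 1,
        ν {a : EuclideanSpace ℝ (Fin d) | u ≤ ‖a‖ ^ t}) < ⊤ := by
      refine lt_of_le_of_lt (setLIntegral_mono'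
        (g := fun _ => volume (Metric.ball (0 : EuclideanSpace ℝ (Fin d)) 1))
        measurableSet_Ioc (fun u _ => ?_)) ?_
      · exact le_trans (measure_mono (subset_univ _))
          (le_of_eq (Measure.restrict_apply_univ _))
      · rw [setLIntegral_const]
        exact ENNReal.mul_lt_top measure_ball_lt_top (by simp [Real.volume_Ioc])
    have hIoi : (∫⁻ u in Ioi (1 : ℝ),
        ν {a : EuclideanSpace ℝ (Fin d) | u ≤ ‖a‖ ^ t}) < ⊤ := by
      have hbd : ∀ u ∈ Ioi (1 : ℝ),
          ν {a : EuclideanSpace ℝ (Fin d) | u ≤ ‖a‖ ^ t} ≤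
            ENNReal.ofReal (u ^ (-(s⁻¹ * d))) *
              volume (Metric.ball (0 : EuclideanSpace ℝ (Fin d)) 1) := by
        intro u hu
        have hu0 : (0 : ℝ) < u := lt_trans one_pos hu
        have hsub : {a : EuclideanSpace ℝ (Fin d) | u ≤ ‖a‖ ^ t} ⊆
            Metric.closedBall 0 (u ^ (-s⁻¹)) := by
          intro a ha
          simp only [mem_setOf_eq] at ha
          rcases eq_or_lt_of_le (norm_nonneg a) with h0a | h0a
          · exfalso
            rw [← h0a, Real.zero_rpow (by linarith : t ≠ 0)] at ha
            linarith
          · rw [mem_closedBall_zero_iff]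
            have hmul := Real.rpow_le_rpow_of_nonpos hu0 ha
              (neg_nonpos.2 (inv_nonneg.2 hs0.le))
            have hpow : (‖a‖ ^ t) ^ (-s⁻¹) = ‖a‖ := by
              rw [← Real.rpow_mul h0a.le]
              have : t * -s⁻¹ = 1 := by
                rw [ht_eq]; field_simp
              rw [this, Real.rpow_one]
            rwa [hpow] at hmul
        have hr0 : (0 : ℝ) ≤ u ^ (-s⁻¹) := Real.rpow_nonneg hu0.le _
        calc ν {a : EuclideanSpace ℝ (Fin d) | u ≤ ‖a‖ ^ t}
            ≤ volume (Metric.closedBall (0 : EuclideanSpace ℝ (Fin d))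
                (u ^ (-s⁻¹))) := by
              rw [hν, Measure.restrict_apply' measurableSet_ball]
              exact measure_mono (inter_subset_left.trans hsub)
          _ = ENNReal.ofReal ((u ^ (-s⁻¹)) ^
                (Module.finrank ℝ (EuclideanSpace ℝ (Fin d)))) *
                volume (Metric.ball (0 : EuclideanSpace ℝ (Fin d)) 1) :=
              Measure.addHaar_closedBall _ _ hr0
          _ = ENNReal.ofReal (u ^ (-(s⁻¹ * d))) *
                volume (Metric.ball (0 : EuclideanSpace ℝ (Fin d)) 1) := by
              congr 2
              rw [finrank_euclideanSpace_fin, ← Real.rpow_natCast (u ^ (-s⁻¹)) d,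
                ← Real.rpow_mul hu0.le]
              ring_nf
      refine lt_of_le_of_lt (setLIntegral_mono' measurableSet_Ioi hbd) ?_
      rw [lintegral_mul_const' _ _ measure_ball_lt_top.ne]
      refine ENNReal.mul_lt_top ?_ measure_ball_lt_top
      have hexp : -(s⁻¹ * d) < -1 := by
        have : (1 : ℝ) < s⁻¹ * d := by
          rw [inv_mul_eq_div]
          exact (one_lt_div hs0).2 hsd
        linarith
      exact (integrableOn_Ioi_rpow_of_lt hexp one_pos).setLIntegral_lt_top
    calc (∫⁻ u in Ioi (0 : ℝ), ν {a : EuclideanSpace ℝ (Fin d) | u ≤ ‖a‖ ^ t})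
        ≤ ∫⁻ u in Ioc (0 : ℝ) 1 ∪ Ioi 1,
            ν {a : EuclideanSpace ℝ (Fin d) | u ≤ ‖a‖ ^ t} :=
          lintegral_mono_set Ioi_subset_Ioc_union_Ioi
      _ ≤ (∫⁻ u in Ioc (0 : ℝ) 1, ν {a : EuclideanSpace ℝ (Fin d) | u ≤ ‖a‖ ^ t})
            + ∫⁻ u in Ioi (1 : ℝ), ν {a : EuclideanSpace ℝ (Fin d) | u ≤ ‖a‖ ^ t} :=
          lintegral_union_le _ _ _
      _ < ⊤ := ENNReal.add_lt_top.2 ⟨hIoc, hIoi⟩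

/-- Integrability of the second symmetric difference quotient of a `C²`
compactly supported function. -/
private lemma second_diff_integrable {d : ℕ} (hd : 1 ≤ d) {α : ℝ}
    (hα0 : 0 < α) (hα2 : α < 2)
    (g : EuclideanSpace ℝ (Fin d) → ℝ) (hg : ContDiff ℝ 2 g)
    (hgs : HasCompactSupport g) (x : EuclideanSpace ℝ (Fin d)) :
    Integrable (fun z : EuclideanSpace ℝ (Fin d) =>
      (2 * g x - g (x + z) - g (x - z)) / ‖z‖ ^ ((d : ℝ) + α)) := by
  have hgd : Differentiable ℝ g := hg.differentiable (by norm_num)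
  obtain ⟨K, hK⟩ := ContDiff.lipschitzWith_of_hasCompactSupport
    (hgs.fderiv (𝕜 := ℝ)) (hg.fderiv_right (m := 1) (by norm_num)) one_ne_zero
  obtain ⟨M, hM⟩ := hgs.exists_bound_of_continuous hg.continuous
  have hM0 : 0 ≤ M := le_trans (norm_nonneg _) (hM x)
  -- Second difference bound near zero
  have key : ∀ y : EuclideanSpace ℝ (Fin d),
      ‖g (x + y) - g x - (fderiv ℝ g x) y‖ ≤ K * ‖y‖ * ‖y‖ := by
    intro y
    have hmem : x + y ∈ Metric.closedBall x ‖y‖ := by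
      rw [mem_closedBall_iff_norm]; simp
    have hres := (convex_closedBall x ‖y‖).norm_image_sub_le_of_norm_hasFDerivWithin_le'
      (f := g) (f' := fderiv ℝ g) (φ := fderiv ℝ g x) (C := K * ‖y‖)
      (fun p _ => (hgd p).hasFDerivAt.hasFDerivWithinAt)
      (fun p hp => by
        have h1 := hK.dist_le_mul p x
        rw [dist_eq_norm] at h1
        refine h1.trans ?_
        have h2 : dist p x ≤ ‖y‖ := mem_closedBall.1 hp
        rw [dist_eq_norm] at h2
        exact mul_le_mul_of_nonneg_left h2 K.coe_nonneg)
      (mem_closedBall_self (norm_nonneg y)) hmem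
    simpa using hres
  have hbound : ∀ z : EuclideanSpace ℝ (Fin d),
      |2 * g x - g (x + z) - g (x - z)| ≤ 2 * K * ‖z‖ ^ (2 : ℕ) := by
    intro z
    have e1 := key z
    have e2 := key (-z)
    rw [Real.norm_eq_abs] at e1 e2
    have hL : (fderiv ℝ g x) (-z) = -(fderiv ℝ g x) z := map_neg _ _
    have hxz : x - z = x + -z := sub_eq_add_neg x z
    have hsplit : 2 * g x - g (x + z) - g (x - z) =
        -((g (x + z) - g x - (fderiv ℝ g x) z) +
          (g (x + -z) - g x - (fderiv ℝ g x) (-z))) := by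
      rw [hxz, hL]; ring
    rw [hsplit, abs_neg]
    have h1 := abs_le.1 e1
    have h2 := abs_le.1 e2
    rw [norm_neg] at e2
    have h2' := abs_le.1 e2
    rw [abs_le]
    constructor <;> nlinarith [sq_nonneg ‖z‖, norm_nonneg z]
  set F : EuclideanSpace ℝ (Fin d) → ℝ := fun z =>
    (2 * g x - g (x + z) - g (x - z)) / ‖z‖ ^ ((d : ℝ) + α) with hF
  have hnumcont : Continuous fun z : EuclideanSpace ℝ (Fin d) =>
      2 * g x - g (x + z) - g (x - z) := by fun_prop
  have hFmeas : AEStronglyMeasurable F volume :=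
    (hnumcont.measurable.div (measurable_norm.pow_const _)).aestronglyMeasurable
  have hdα : (0 : ℝ) < (d : ℝ) + α := by
    have : (1 : ℝ) ≤ d := by exact_mod_cast hd
    linarith
  -- Integrability on the unit ball
  have h1 : IntegrableOn F (Metric.ball 0 1) volume := by
    have hmaj : IntegrableOn
        (fun z : EuclideanSpace ℝ (Fin d) => 2 * K * ‖z‖ ^ (2 - ((d : ℝ) + α)))
        (Metric.ball 0 1) volume :=
      (ball_rpow_integrable hd (by linarith)).const_mul _
    refine hmaj.mono' hFmeas.restrict ?_
    filter_upwards [ae_restrict_mem measurableSet_ball] with z _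
    rcases eq_or_ne z 0 with rfl | hz
    · have : F 0 = 0 := by
        rw [hF]
        simp only [add_zero, sub_zero]
        rw [show 2 * g x - g x - g x = 0 from by ring, zero_div]
      rw [this, norm_zero]
      positivity
    · have hz0 : (0 : ℝ) < ‖z‖ := norm_pos_iff.2 hz
      have hp : (0 : ℝ) < ‖z‖ ^ ((d : ℝ) + α) := Real.rpow_pos_of_pos hz0 _
      rw [hF, Real.norm_eq_abs, abs_div, abs_of_pos hp]
      have : |2 * g x - g (x + z) - g (x - z)| / ‖z‖ ^ ((d : ℝ) + α) ≤
          2 * K * ‖z‖ ^ (2 : ℕ) / ‖z‖ ^ ((d : ℝ) + α) := by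
        gcongr
        exact hbound z
      refine this.trans (le_of_eq ?_)
      rw [mul_div_assoc]
      congr 1
      rw [← Real.rpow_natCast ‖z‖ 2, ← Real.rpow_sub hz0]
      norm_num
  -- Integrability outside the unit ball
  have h2 : IntegrableOn F (Metric.ball (0 : EuclideanSpace ℝ (Fin d)) 1)ᶜ volume := by
    have hfr : (Module.finrank ℝ (EuclideanSpace ℝ (Fin d)) : ℝ) < (d : ℝ) + α := by
      rw [finrank_euclideanSpace_fin]; linarith
    have hmaj : IntegrableOn
        (fun z : EuclideanSpace ℝ (Fin d) =>
          4 * M * 2 ^ ((d : ℝ) + α) * (1 + ‖z‖) ^ (-((d : ℝ) + α)))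
        (Metric.ball (0 : EuclideanSpace ℝ (Fin d)) 1)ᶜ volume :=
      ((integrable_one_add_norm hfr).const_mul _).integrableOn
    refine hmaj.mono' hFmeas.restrict ?_
    filter_upwards [ae_restrict_mem measurableSet_ball.compl] with z hz
    have hz1 : (1 : ℝ) ≤ ‖z‖ := by
      by_contra h
      exact hz (mem_ball_zero_iff.2 (lt_of_not_ge h))
    have hz0 : (0 : ℝ) < ‖z‖ := lt_of_lt_of_le one_pos hz1
    have hp : (0 : ℝ) < ‖z‖ ^ ((d : ℝ) + α) := Real.rpow_pos_of_pos hz0 _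
    have b1 := abs_le.1 (by simpa [Real.norm_eq_abs] using hM x)
    have b2 := abs_le.1 (by simpa [Real.norm_eq_abs] using hM (x + z))
    have b3 := abs_le.1 (by simpa [Real.norm_eq_abs] using hM (x - z))
    have hnum : |2 * g x - g (x + z) - g (x - z)| ≤ 4 * M :=
      abs_le.2 ⟨by linarith [b1.1, b2.2, b3.2], by linarith [b1.2, b2.1, b3.1]⟩
    have hcmp : ‖z‖ ^ (-((d : ℝ) + α)) ≤ 2 ^ ((d : ℝ) + α) * (1 + ‖z‖) ^ (-((d : ℝ) + α)) := by
      have hhalf : (0 : ℝ) < 2⁻¹ * (1 + ‖z‖) := by positivity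
      have hle : 2⁻¹ * (1 + ‖z‖) ≤ ‖z‖ := by linarith
      have := Real.rpow_le_rpow_of_nonpos hhalf hle (by linarith : -((d : ℝ) + α) ≤ 0)
      refine this.trans (le_of_eq ?_)
      rw [Real.mul_rpow (by norm_num) (by positivity),
        Real.inv_rpow (by norm_num : (0:ℝ) ≤ 2), ← Real.rpow_neg (by norm_num : (0:ℝ) ≤ 2),
        neg_neg]
    rw [hF, Real.norm_eq_abs, abs_div, abs_of_pos hp]
    calc |2 * g x - g (x + z) - g (x - z)| / ‖z‖ ^ ((d : ℝ) + α)
        ≤ 4 * M / ‖z‖ ^ ((d : ℝ) + α) := by gcongr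
      _ = 4 * M * ‖z‖ ^ (-((d : ℝ) + α)) := by
          rw [Real.rpow_neg (norm_nonneg z), div_eq_mul_inv]
      _ ≤ 4 * M * (2 ^ ((d : ℝ) + α) * (1 + ‖z‖) ^ (-((d : ℝ) + α))) := by
          apply mul_le_mul_of_nonneg_left hcmp (by linarith)
      _ = 4 * M * 2 ^ ((d : ℝ) + α) * (1 + ‖z‖) ^ (-((d : ℝ) + α)) := by ring
  have := h1.union h2
  rwa [union_compl_self, integrableOn_univ] at this

theorem pointwise_convexity_inequality_fractional_laplacian
    (d : ℕ) (hd : 1 ≤ d) (α : ℝ) (hα0 : 0 < α) (hα2 : α < 2)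
    (φ : ℝ → ℝ) (hφ_convex : ConvexOn ℝ Set.univ φ) (hφ_smooth : ContDiff ℝ 2 φ)
    (w : EuclideanSpace ℝ (Fin d) → ℝ) (hw_smooth : ContDiff ℝ (⊤ : ℕ∞) w)
    (hw_supp : HasCompactSupport w)
    (x : EuclideanSpace ℝ (Fin d)) :
    Integrable (fun z : EuclideanSpace ℝ (Fin d) =>
        (2 * φ (w x) - φ (w (x + z)) - φ (w (x - z))) / ‖z‖ ^ ((d : ℝ) + α)) ∧
    Integrable (fun z : EuclideanSpace ℝ (Fin d) =>
        (2 * w x - w (x + z) - w (x - z)) / ‖z‖ ^ ((d : ℝ) + α)) ∧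
    (∫ z : EuclideanSpace ℝ (Fin d),
        (2 * φ (w x) - φ (w (x + z)) - φ (w (x - z))) / ‖z‖ ^ ((d : ℝ) + α)) ≤
      deriv φ (w x) *
        ∫ z : EuclideanSpace ℝ (Fin d),
          (2 * w x - w (x + z) - w (x - z)) / ‖z‖ ^ ((d : ℝ) + α) := by
  have hw2 : ContDiff ℝ 2 w := hw_smooth.of_le (WithTop.coe_le_coe.2 le_top)
  have hInt2 : Integrable (fun z : EuclideanSpace ℝ (Fin d) =>
      (2 * w x - w (x + z) - w (x - z)) / ‖z‖ ^ ((d : ℝ) + α)) :=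
    second_diff_integrable hd hα0 hα2 w hw2 hw_supp x
  set g : EuclideanSpace ℝ (Fin d) → ℝ := fun y => φ (w y) - φ 0 with hg_def
  have hg2 : ContDiff ℝ 2 g := (hφ_smooth.comp hw2).sub contDiff_const
  have hgsupp : HasCompactSupport g :=
    hw_supp.comp_left (g := fun t : ℝ => φ t - φ 0) (by simp)
  have heq : ∀ z : EuclideanSpace ℝ (Fin d),
      2 * φ (w x) - φ (w (x + z)) - φ (w (x - z)) =
        2 * g x - g (x + z) - g (x - z) := fun z => by
    simp only [hg_def]; ring
  have hInt1 : Integrable (fun z : EuclideanSpace ℝ (Fin d) =>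
      (2 * φ (w x) - φ (w (x + z)) - φ (w (x - z))) / ‖z‖ ^ ((d : ℝ) + α)) := by
    have h := second_diff_integrable hd hα0 hα2 g hg2 hgsupp x
    simpa only [← heq] using h
  refine ⟨hInt1, hInt2, ?_⟩
  set c := deriv φ (w x) with hc
  have hφd : Differentiable ℝ φ := hφ_smooth.differentiable (by norm_num)
  have tangent : ∀ a b : ℝ, deriv φ b * (a - b) ≤ φ a - φ b := by
    intro a b
    rcases lt_trichotomy b a with h | h | h
    · have h1 := hφ_convex.deriv_le_slope (mem_univ b) (mem_univ a) h (hφd b)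
      rw [slope_def_field] at h1
      have := (le_div_iff₀ (sub_pos.2 h)).1 h1
      linarith
    · subst h; simp
    · have h1 := hφ_convex.slope_le_deriv (mem_univ a) (mem_univ b) h (hφd b)
      rw [slope_def_field] at h1
      have h2 := (div_le_iff₀ (sub_pos.2 h)).1 h1
      have h3 : deriv φ b * (a - b) = -(deriv φ b * (b - a)) := by ring
      rw [h3]; linarith
  have hpt : ∀ z : EuclideanSpace ℝ (Fin d),
      (2 * φ (w x) - φ (w (x + z)) - φ (w (x - z))) / ‖z‖ ^ ((d : ℝ) + α) ≤
        c * ((2 * w x - w (x + z) - w (x - z)) / ‖z‖ ^ ((d : ℝ) + α)) := by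
    intro z
    rcases eq_or_ne z 0 with rfl | hz
    · simp [Real.zero_rpow (by positivity : ((d : ℝ) + α) ≠ 0)]
    · have hp : (0 : ℝ) < ‖z‖ ^ ((d : ℝ) + α) :=
        Real.rpow_pos_of_pos (norm_pos_iff.2 hz) _
      rw [← mul_div_assoc]
      have t1 := tangent (w (x + z)) (w x)
      have t2 := tangent (w (x - z)) (w x)
      have hnum : 2 * φ (w x) - φ (w (x + z)) - φ (w (x - z)) ≤
          c * (2 * w x - w (x + z) - w (x - z)) := by
        have hre : c * (2 * w x - w (x + z) - w (x - z)) =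
            -(c * (w (x + z) - w x)) + -(c * (w (x - z) - w x)) := by ring
        rw [hre, hc]; linarith
      gcongr
  calc (∫ z : EuclideanSpace ℝ (Fin d),
        (2 * φ (w x) - φ (w (x + z)) - φ (w (x - z))) / ‖z‖ ^ ((d : ℝ) + α))
      ≤ ∫ z : EuclideanSpace ℝ (Fin d),
          c * ((2 * w x - w (x + z) - w (x - z)) / ‖z‖ ^ ((d : ℝ) + α)) :=
        integral_mono hInt1 (hInt2.const_mul c) hpt
    _ = c * ∫ z : EuclideanSpace ℝ (Fin d),
          (2 * w x - w (x + z) - w (x - z)) / ‖z‖ ^ ((d : ℝ) + α) :=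
        integral_const_mul c _
end

section
/- (Positivity of the nonlocal dissipation.) Let d ≥ 1 be an integer and α ∈ (0,2). Let g, h : ℝ → ℝ be twice continuously differentiable, strictly increasing functions with g(0) = 0 and h(0) = 0, and let v : ℝ^d → ℝ be smooth, compactly supported, and nonnegative. Then ∫_{ℝ^d} h(v(x)) · ( ∫_{ℝ^d} (2 g(v(x)) - g(v(x+z)) - g(v(x-z))) / |z|^{d+α} dz ) dx ≥ 0, where the inner integral converges absolutely for every x and the outer integrand is integrable. -/
open MeasureTheory Real Metric Set

lemma second_diff_bound {E : Type*} [NormedAddCommGroup E] [NormedSpace ℝ E]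
    (G : E → ℝ) (hG : ContDiff ℝ 2 G) (hsupp : HasCompactSupport G) :
    ∃ C, 0 ≤ C ∧ ∀ x z, |2 * G x - G (x + z) - G (x - z)| ≤ C * ‖z‖ ^ 2 := by
  have hfd : ContDiff ℝ 1 (fderiv ℝ G) := hG.fderiv_right (le_refl _)
  obtain ⟨L, hL⟩ := ContDiff.lipschitzWith_of_hasCompactSupport (hsupp.fderiv ℝ) hfd one_ne_zero
  have hdiff : Differentiable ℝ G := hG.differentiable two_ne_zero
  have key : ∀ (x z : E), |G (x + z) - G x - fderiv ℝ G x z| ≤ L * ‖z‖ * ‖z‖ := by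
    intro x z
    set f1 : E → ℝ := fun y => G y - fderiv ℝ G x y with hf1
    have hder : ∀ y ∈ Metric.closedBall x ‖z‖,
        HasFDerivWithinAt f1 (fderiv ℝ G y - fderiv ℝ G x) (Metric.closedBall x ‖z‖) y := by
      intro y _
      exact (((hdiff y).hasFDerivAt).sub ((fderiv ℝ G x).hasFDerivAt)).hasFDerivWithinAt
    have hbound : ∀ y ∈ Metric.closedBall x ‖z‖, ‖fderiv ℝ G y - fderiv ℝ G x‖ ≤ L * ‖z‖ := by
      intro y hy
      calc ‖fderiv ℝ G y - fderiv ℝ G x‖ = dist (fderiv ℝ G y) (fderiv ℝ G x) := (dist_eq_norm _ _).symm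
        _ ≤ L * dist y x := hL.dist_le_mul y x
        _ ≤ L * ‖z‖ := by
            have := Metric.mem_closedBall.1 hy
            exact mul_le_mul_of_nonneg_left this L.2
    have hmem : x + z ∈ Metric.closedBall x ‖z‖ := by
      simp [Metric.mem_closedBall, dist_eq_norm]
    have hx : x ∈ Metric.closedBall x ‖z‖ := Metric.mem_closedBall_self (norm_nonneg z)
    have := (convex_closedBall x ‖z‖).norm_image_sub_le_of_norm_hasFDerivWithin_le
      hder hbound hx hmem
    have e1 : f1 (x + z) - f1 x = G (x + z) - G x - fderiv ℝ G x z := by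
      simp only [hf1]
      have : fderiv ℝ G x (x + z) = fderiv ℝ G x x + fderiv ℝ G x z := by
        rw [← map_add]
      rw [this]; ring
    rw [e1] at this
    simpa [Real.norm_eq_abs, add_sub_cancel_left] using this
  refine ⟨2 * L, by positivity, fun x z => ?_⟩
  have h1 := key x z
  have h2 := key x (-z)
  have e2 : x + -z = x - z := by abel
  have e3 : fderiv ℝ G x (-z) = -fderiv ℝ G x z := map_neg _ _
  rw [e2, e3, norm_neg] at h2
  have : 2 * G x - G (x + z) - G (x - z) =
      -((G (x + z) - G x - fderiv ℝ G x z) + (G (x - z) - G x - -fderiv ℝ G x z)) := by ring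
  rw [this, abs_neg]
  calc |(G (x + z) - G x - fderiv ℝ G x z) + (G (x - z) - G x - -fderiv ℝ G x z)|
      ≤ |G (x + z) - G x - fderiv ℝ G x z| + |G (x - z) - G x - -fderiv ℝ G x z| := abs_add_le _ _
    _ ≤ L * ‖z‖ * ‖z‖ + L * ‖z‖ * ‖z‖ := add_le_add h1 h2
    _ = 2 * L * ‖z‖ ^ 2 := by ring


lemma kernel_integrable (d : ℕ) (hd : 1 ≤ d) (α C M : ℝ) (hα0 : 0 < α) (hα2 : α < 2)
    (hC : 0 ≤ C) (hM : 0 ≤ M) :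
    Integrable (fun z : EuclideanSpace ℝ (Fin d) =>
      min (C * ‖z‖ ^ 2) M / ‖z‖ ^ ((d : ℝ) + α)) := by
  set E := EuclideanSpace ℝ (Fin d)
  set ψ : E → ℝ := fun z => min (C * ‖z‖ ^ 2) M / ‖z‖ ^ ((d : ℝ) + α) with hψdef
  have hdα : (0:ℝ) < (d : ℝ) + α := by positivity
  have hkcont : Continuous fun z : E => ‖z‖ ^ ((d : ℝ) + α) :=
    continuous_norm.rpow_const fun z => Or.inr hdα.le
  have hmeas : Measurable ψ := by
    apply Measurable.div
    · exact ((continuous_const.mul (continuous_norm.pow 2)).min continuous_const).measurable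
    · exact hkcont.measurable
  have hψ_nonneg : ∀ z, 0 ≤ ψ z := fun z =>
    div_nonneg (le_min (by positivity) hM) (rpow_nonneg (norm_nonneg z) _)
  haveI : Nonempty (Fin d) := ⟨⟨0, hd⟩⟩
  haveI hnt : Nontrivial E := by
    refine ⟨0, EuclideanSpace.single ⟨0, hd⟩ 1, fun hcon => ?_⟩
    have h1 := congrArg (fun f : E => f ⟨0, hd⟩) hcon
    rw [EuclideanSpace.single_apply] at h1
    have h2 : (0 : E) ⟨0, hd⟩ = 0 := rfl
    rw [h2] at h1
    simp at h1
  set q : ℝ := (2 : ℝ)⁻¹ with hq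
  have hq0 : (0:ℝ) < q := by norm_num [hq]
  have hq1 : q < 1 := by norm_num [hq]
  set A : ℕ → Set E := fun n => closedBall 0 (q ^ n) \ ball 0 (q ^ (n + 1)) with hA
  have hAmeas : ∀ n, MeasurableSet (A n) :=
    fun n => measurableSet_closedBall.diff measurableSet_ball
  -- bridges between nat powers and rpow
  have bridge1 : ∀ n : ℕ, ((q : ℝ) ^ n) ^ (2:ℕ) = q ^ (2 * (n:ℝ)) := by
    intro n
    rw [← rpow_natCast q n, ← rpow_natCast (q ^ ((n:ℝ))) 2, ← rpow_mul hq0.le]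
    congr 1; push_cast; ring
  have bridge2 : ∀ n : ℕ, ((q : ℝ) ^ (n+1)) ^ ((d:ℝ)+α) = q ^ (((n:ℝ)+1) * ((d:ℝ)+α)) := by
    intro n
    rw [← rpow_natCast q (n+1), ← rpow_mul hq0.le]
    congr 1; push_cast; ring
  have bridge3 : ∀ n : ℕ, ((q : ℝ) ^ n) ^ (d:ℕ) = q ^ ((n:ℝ) * (d:ℝ)) := by
    intro n
    rw [← rpow_natCast q n, ← rpow_natCast (q ^ ((n:ℝ))) d, ← rpow_mul hq0.le]
  set B : ℕ → ℝ := fun n => C * q ^ (2 * (n:ℝ)) / q ^ (((n:ℝ)+1) * ((d:ℝ)+α)) with hB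
  have hBpos : ∀ n, 0 ≤ B n := fun n => by
    have h1 := rpow_pos_of_pos hq0 (2 * (n:ℝ))
    have h2 := rpow_pos_of_pos hq0 (((n:ℝ)+1) * ((d:ℝ)+α))
    positivity
  have hbd : ∀ n, ∀ z ∈ A n, ψ z ≤ B n := by
    intro n z hz
    obtain ⟨hz1, hz2⟩ := hz
    rw [mem_closedBall, dist_zero_right] at hz1
    rw [mem_ball, dist_zero_right, not_lt] at hz2
    have hzpos : 0 < ‖z‖ := lt_of_lt_of_le (pow_pos hq0 _) hz2
    have hden : (q ^ (n+1)) ^ ((d:ℝ)+α) ≤ ‖z‖ ^ ((d:ℝ)+α) :=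
      rpow_le_rpow (pow_pos hq0 _).le hz2 hdα.le
    have hdenpos : (0:ℝ) < (q ^ (n+1)) ^ ((d:ℝ)+α) := rpow_pos_of_pos (pow_pos hq0 _) _
    have hnum : min (C * ‖z‖ ^ 2) M ≤ C * q ^ (2 * (n:ℝ)) := by
      refine (min_le_left _ _).trans ?_
      rw [← bridge1 n]
      have : ‖z‖ ^ 2 ≤ (q ^ n) ^ 2 := by
        apply pow_le_pow_left₀ (norm_nonneg z) hz1
      nlinarith
    calc ψ z ≤ C * q ^ (2 * (n:ℝ)) / (q ^ (n+1)) ^ ((d:ℝ)+α) := by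
          apply div_le_div₀ (by positivity) hnum hdenpos hden
      _ = B n := by rw [hB]; simp only; rw [← bridge2 n]
  have hint : ∀ n, IntegrableOn ψ (A n) := by
    intro n
    apply Measure.integrableOn_of_bounded (M := B n)
    · exact ((measure_mono (diff_subset (t := ball 0 (q ^ (n+1))))).trans_lt
        measure_closedBall_lt_top).ne
    · exact hmeas.aestronglyMeasurable
    · refine (ae_restrict_iff' (hAmeas n)).2 (ae_of_all _ fun z hz => ?_)
      rw [Real.norm_eq_abs, abs_of_nonneg (hψ_nonneg z)]
      exact hbd n z hz
  set K : ℝ := (volume (ball (0:E) 1)).toReal with hK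
  have hK0 : 0 ≤ K := ENNReal.toReal_nonneg
  have hvol : ∀ n, (volume (A n)).toReal ≤ q ^ ((n:ℝ) * (d:ℝ)) * K := by
    intro n
    have h2 : volume (closedBall (0:E) (q ^ n)) =
        ENNReal.ofReal ((q ^ n) ^ Module.finrank ℝ E) * volume (ball (0:E) 1) :=
      Measure.addHaar_closedBall _ _ (pow_pos hq0 n).le
    have hne : volume (closedBall (0:E) (q ^ n)) ≠ ⊤ := measure_closedBall_lt_top.ne
    have hsub : A n ⊆ closedBall (0:E) (q ^ n) := diff_subset
    have h3 := ENNReal.toReal_mono hne (measure_mono hsub)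
    refine h3.trans ?_
    rw [h2, ENNReal.toReal_mul, ENNReal.toReal_ofReal (by positivity)]
    have : (q ^ n) ^ Module.finrank ℝ E = q ^ ((n:ℝ) * (d:ℝ)) := by
      have hfr : Module.finrank ℝ E = d := finrank_euclideanSpace_fin
      rw [hfr, bridge3 n]
    rw [this]
  have hintnorm : ∀ n, ∫ z in A n, ‖ψ z‖ ≤ B n * (q ^ ((n:ℝ) * (d:ℝ)) * K) := by
    intro n
    have hsub : A n ⊆ closedBall (0:E) (q ^ n) := diff_subset
    have hfin : volume (A n) < ⊤ :=
      (measure_mono hsub).trans_lt measure_closedBall_lt_top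
    have h1 : ‖∫ z in A n, ‖ψ z‖‖ ≤ B n * (volume (A n)).toReal := by
      apply norm_setIntegral_le_of_norm_le_const hfin
      intro z hz
      rw [norm_norm, Real.norm_eq_abs, abs_of_nonneg (hψ_nonneg z)]
      exact hbd n z hz
    rw [Real.norm_eq_abs, abs_of_nonneg (integral_nonneg fun z => norm_nonneg _)] at h1
    exact h1.trans (mul_le_mul_of_nonneg_left (hvol n) (hBpos n))
  have hform : ∀ n : ℕ, B n * (q ^ ((n:ℝ) * (d:ℝ)) * K) =
      (C * K / q ^ ((d:ℝ)+α)) * (q ^ ((2:ℝ) - α)) ^ n := by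
    intro n
    have e1 : ((q : ℝ) ^ ((2:ℝ) - α)) ^ n = q ^ (((2:ℝ) - α) * (n:ℝ)) := by
      rw [← rpow_natCast (q ^ ((2:ℝ) - α)) n, ← rpow_mul hq0.le]
    rw [hB, e1]
    simp only
    calc C * q ^ (2 * (n:ℝ)) / q ^ (((n:ℝ)+1) * ((d:ℝ)+α)) * (q ^ ((n:ℝ) * (d:ℝ)) * K)
        = C * K * (q ^ (2 * (n:ℝ)) * q ^ ((n:ℝ) * (d:ℝ)) / q ^ (((n:ℝ)+1) * ((d:ℝ)+α))) := by
          ring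
      _ = C * K * q ^ (2 * (n:ℝ) + (n:ℝ) * (d:ℝ) - ((n:ℝ)+1) * ((d:ℝ)+α)) := by
          rw [← rpow_add hq0, ← rpow_sub hq0]
      _ = C * K * q ^ (((2:ℝ) - α) * (n:ℝ) - ((d:ℝ)+α)) := by
          congr 1
          ring
      _ = C * K * (q ^ (((2:ℝ) - α) * (n:ℝ)) / q ^ ((d:ℝ)+α)) := by
          rw [rpow_sub hq0]
      _ = C * K / q ^ ((d:ℝ)+α) * q ^ (((2:ℝ) - α) * (n:ℝ)) := by ring
  have hsum : Summable fun n => ∫ z in A n, ‖ψ z‖ := by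
    apply Summable.of_nonneg_of_le (fun n => integral_nonneg fun z => norm_nonneg _)
      (fun n => (hintnorm n).trans (le_of_eq (hform n)))
    apply Summable.mul_left
    apply summable_geometric_of_lt_one (rpow_nonneg hq0.le _)
    calc q ^ ((2:ℝ) - α) < q ^ (0:ℝ) := by
          apply rpow_lt_rpow_of_exponent_gt hq0 hq1
          linarith
      _ = 1 := rpow_zero q
  have hUnion : IntegrableOn ψ (⋃ n, A n) :=
    integrableOn_iUnion_of_summable_integral_norm hint hsum
  have hcompl : IntegrableOn ψ (ball (0:E) 1)ᶜ := by
    have hdub : ((Module.finrank ℝ E : ℕ) : ℝ) < (d:ℝ) + α := by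
      rw [finrank_euclideanSpace_fin]; linarith
    have hbase : Integrable (fun z : E => M * (2:ℝ) ^ ((d:ℝ)+α) * (1 + ‖z‖) ^ (-((d:ℝ)+α))) :=
      (integrable_one_add_norm hdub).const_mul _
    refine Integrable.mono' hbase.integrableOn hmeas.aestronglyMeasurable.restrict ?_
    refine (ae_restrict_iff' measurableSet_ball.compl).2 (ae_of_all _ fun z hz => ?_)
    rw [mem_compl_iff, mem_ball, dist_zero_right, not_lt] at hz
    have hz0 : (0:ℝ) < ‖z‖ := lt_of_lt_of_le one_pos hz
    rw [Real.norm_eq_abs, abs_of_nonneg (hψ_nonneg z)]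
    have h1 : ψ z ≤ M / ‖z‖ ^ ((d:ℝ)+α) :=
      div_le_div₀ hM (min_le_right _ _) (rpow_pos_of_pos hz0 _) le_rfl
    refine h1.trans ?_
    have hkey : (1 + ‖z‖) ^ ((d:ℝ)+α) ≤ (2:ℝ) ^ ((d:ℝ)+α) * ‖z‖ ^ ((d:ℝ)+α) := by
      rw [← mul_rpow (by norm_num) (norm_nonneg z)]
      apply rpow_le_rpow (by positivity) (by linarith) hdα.le
    rw [rpow_neg (by positivity), mul_assoc, ← div_eq_mul_inv, ← mul_div_assoc]
    rw [div_le_div_iff₀ (rpow_pos_of_pos hz0 _) (rpow_pos_of_pos (by positivity) _)]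
    calc M * (1 + ‖z‖) ^ ((d:ℝ)+α) ≤ M * ((2:ℝ) ^ ((d:ℝ)+α) * ‖z‖ ^ ((d:ℝ)+α)) :=
          mul_le_mul_of_nonneg_left hkey hM
      _ = M * (2:ℝ) ^ ((d:ℝ)+α) * ‖z‖ ^ ((d:ℝ)+α) := by ring
  have hzero : IntegrableOn ψ ({0} : Set E) := by
    have h0 : volume ({0} : Set E) = 0 := measure_singleton 0
    rw [IntegrableOn, Measure.restrict_eq_zero.2 h0]
    exact integrable_zero_measure
  have hcover : (Set.univ : Set E) ⊆ ({0} : Set E) ∪ ((⋃ n, A n) ∪ (ball (0:E) 1)ᶜ) := by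
    intro z _
    by_cases hz0 : z = 0
    · exact Or.inl (by simp [hz0])
    by_cases hz1 : z ∈ ball (0:E) 1
    · refine Or.inr (Or.inl ?_)
      rw [mem_ball, dist_zero_right] at hz1
      have hzpos : 0 < ‖z‖ := norm_pos_iff.2 hz0
      have hex : ∃ m, q ^ (m + 1) ≤ ‖z‖ := by
        obtain ⟨m, hm⟩ := exists_pow_lt_of_lt_one hzpos hq1
        exact ⟨m, by
          have : q ^ (m+1) ≤ q ^ m := pow_le_pow_of_le_one hq0.le hq1.le (Nat.le_succ m)
          linarith⟩
      classical
      set n := Nat.find hex with hn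
      have hfind : q ^ (n + 1) ≤ ‖z‖ := Nat.find_spec hex
      have hupper : ‖z‖ ≤ q ^ n := by
        rcases Nat.eq_zero_or_pos n with h0 | hpos
        · rw [h0, pow_zero]; exact hz1.le
        · obtain ⟨k, hk⟩ := Nat.exists_eq_succ_of_ne_zero hpos.ne'
          have := Nat.find_min hex (m := k) (by omega)
          rw [not_le] at this
          rw [hk]
          exact le_of_lt (by simpa [Nat.succ_eq_add_one, ← hk] using this)
      exact mem_iUnion.2 ⟨n, ⟨by simpa [dist_zero_right] using hupper,
        by simp [dist_zero_right, not_lt, hfind]⟩⟩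
    · exact Or.inr (Or.inr hz1)
  have : IntegrableOn ψ (Set.univ : Set E) :=
    ((hzero.union (hUnion.union hcompl)).mono_set hcover)
  rwa [integrableOn_univ] at this

theorem dissipation_aux (d : ℕ) (hd : 1 ≤ d) (α : ℝ) (hα0 : 0 < α) (hα2 : α < 2)
    (G H : EuclideanSpace ℝ (Fin d) → ℝ)
    (hG : ContDiff ℝ 2 G) (hGsupp : HasCompactSupport G)
    (hHcont : Continuous H) (hHsupp : HasCompactSupport H)
    (hsign : ∀ a b : EuclideanSpace ℝ (Fin d), 0 ≤ (H a - H b) * (G a - G b)) :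
    (∀ x : EuclideanSpace ℝ (Fin d),
        Integrable (fun z : EuclideanSpace ℝ (Fin d) =>
          (2 * G x - G (x + z) - G (x - z)) / ‖z‖ ^ ((d : ℝ) + α))) ∧
    Integrable (fun x : EuclideanSpace ℝ (Fin d) =>
        H x * ∫ z : EuclideanSpace ℝ (Fin d),
          (2 * G x - G (x + z) - G (x - z)) / ‖z‖ ^ ((d : ℝ) + α)) ∧
    0 ≤ ∫ x : EuclideanSpace ℝ (Fin d),
        H x * ∫ z : EuclideanSpace ℝ (Fin d),
          (2 * G x - G (x + z) - G (x - z)) / ‖z‖ ^ ((d : ℝ) + α) := by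
  have hE : True := trivial
  have hdα : (0:ℝ) < (d : ℝ) + α := by positivity
  set k : EuclideanSpace ℝ (Fin d) → ℝ := fun z => ‖z‖ ^ ((d : ℝ) + α) with hk
  have hk_nonneg : ∀ z, 0 ≤ k z := fun z => rpow_nonneg (norm_nonneg z) _
  have hkcont : Continuous k := continuous_norm.rpow_const fun z => Or.inr hdα.le
  obtain ⟨C, hC0, hC⟩ := second_diff_bound G hG hGsupp
  obtain ⟨M, hM⟩ := hGsupp.exists_bound_of_continuous hG.continuous
  have hM0 : 0 ≤ M := le_trans (norm_nonneg _) (hM 0)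
  set ψ : EuclideanSpace ℝ (Fin d) → ℝ := fun z => min (C * ‖z‖ ^ 2) (4 * M) / k z with hψ
  have hψint : Integrable ψ := kernel_integrable d hd α C (4*M) hα0 hα2 hC0 (by positivity)
  have hψ_nonneg : ∀ z, 0 ≤ ψ z := fun z =>
    div_nonneg (le_min (by positivity) (by positivity)) (hk_nonneg z)
  set N : EuclideanSpace ℝ (Fin d) → EuclideanSpace ℝ (Fin d) → ℝ := fun x z => 2 * G x - G (x + z) - G (x - z) with hN
  have hnum : ∀ x z, |N x z| ≤ min (C * ‖z‖ ^ 2) (4 * M) := by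
    intro x z
    refine le_min (hC x z) ?_
    have h1 := hM x; have h2 := hM (x + z); have h3 := hM (x - z)
    rw [Real.norm_eq_abs] at h1 h2 h3
    calc |N x z| ≤ 2 * |G x| + |G (x+z)| + |G (x-z)| := by
          rw [hN]; simp only
          calc |2 * G x - G (x + z) - G (x - z)|
              ≤ |2 * G x - G (x+z)| + |G (x-z)| := abs_sub _ _
            _ ≤ (|2 * G x| + |G (x+z)|) + |G (x-z)| := by
                have := abs_sub (2 * G x) (G (x+z)); linarith
            _ = 2 * |G x| + |G (x+z)| + |G (x-z)| := by rw [abs_mul]; norm_num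
      _ ≤ 4 * M := by linarith
  have hfrac : ∀ x z, |N x z / k z| ≤ ψ z := by
    intro x z
    rw [abs_div, abs_of_nonneg (hk_nonneg z)]
    have hz0 : k z = 0 ∨ 0 < k z := (eq_or_lt_of_le (hk_nonneg z)).imp Eq.symm id
    rcases hz0 with hz | hz
    · simp only [hψ]
      rw [hz, div_zero, div_zero]
    · exact (div_le_div_iff_of_pos_right hz).2 (hnum x z)
  have hGc : Continuous G := hG.continuous
  have hNcont : Continuous fun p : EuclideanSpace ℝ (Fin d) × EuclideanSpace ℝ (Fin d) =>
      N p.1 p.2 := by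
    rw [hN]; fun_prop
  have hmeasF : ∀ x : EuclideanSpace ℝ (Fin d), AEStronglyMeasurable (fun z => N x z / k z) volume := by
    intro x
    apply Measurable.aestronglyMeasurable
    apply Measurable.div ?_ hkcont.measurable
    exact (hNcont.comp (Continuous.prodMk_right x)).measurable
  -- Part 1
  have part1 : ∀ x : EuclideanSpace ℝ (Fin d), Integrable (fun z => N x z / k z) := by
    intro x
    refine hψint.mono' (hmeasF x) (ae_of_all _ fun z => ?_)
    rw [Real.norm_eq_abs]
    exact hfrac x z
  have hHint : Integrable H := hHcont.integrable_of_hasCompactSupport hHsupp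
  set F : EuclideanSpace ℝ (Fin d) × EuclideanSpace ℝ (Fin d) → ℝ :=
    fun p => H p.1 * (N p.1 p.2 / k p.2) with hF
  have hFmeas : AEStronglyMeasurable F ((volume : Measure (EuclideanSpace ℝ (Fin d))).prod volume) := by
    apply Measurable.aestronglyMeasurable
    exact ((hHcont.comp continuous_fst).measurable).mul
      (hNcont.measurable.div ((hkcont.comp continuous_snd).measurable))
  have hmaj : Integrable (fun p : EuclideanSpace ℝ (Fin d) × EuclideanSpace ℝ (Fin d) =>
      ‖H p.1‖ * ψ p.2) ((volume : Measure (EuclideanSpace ℝ (Fin d))).prod volume) :=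
    hHint.norm.mul_prod hψint
  have hProdInt : Integrable F ((volume : Measure (EuclideanSpace ℝ (Fin d))).prod volume) := by
    refine hmaj.mono' hFmeas (ae_of_all _ fun p => ?_)
    rw [hF]
    simp only
    rw [norm_mul]
    apply mul_le_mul_of_nonneg_left ?_ (norm_nonneg _)
    rw [Real.norm_eq_abs]
    exact hfrac p.1 p.2
  have part2 : Integrable (fun x : EuclideanSpace ℝ (Fin d) => H x * ∫ z, N x z / k z) := by
    have h := hProdInt.integral_prod_left
    simp only [hF] at h
    simpa only [integral_const_mul] using h
  refine ⟨part1, part2, ?_⟩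
  -- Part 3 : nonnegativity
  have hswap : ∫ x, H x * ∫ z, N x z / k z = ∫ z, ∫ x, H x * (N x z / k z) := by
    have h1 : (fun x : EuclideanSpace ℝ (Fin d) => H x * ∫ z, N x z / k z)
        = fun x => ∫ z, H x * (N x z / k z) := funext fun x => (integral_const_mul _ _).symm
    rw [h1]
    exact integral_integral_swap hProdInt
  rw [hswap]
  refine integral_nonneg fun z => ?_
  -- fixed z : compute the inner integral
  have hGc2 : Continuous fun x : EuclideanSpace ℝ (Fin d) => G (x + z) :=
    hGc.comp (continuous_id.add continuous_const)
  have hGc3 : Continuous fun x : EuclideanSpace ℝ (Fin d) => G (x - z) :=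
    hGc.comp (continuous_id.sub continuous_const)
  have hHc2 : Continuous fun x : EuclideanSpace ℝ (Fin d) => H (x + z) :=
    hHcont.comp (continuous_id.add continuous_const)
  have i1 : Integrable (fun x : EuclideanSpace ℝ (Fin d) => H x * G x) :=
    (hHcont.mul hGc).integrable_of_hasCompactSupport hHsupp.mul_right
  have i2 : Integrable (fun x : EuclideanSpace ℝ (Fin d) => H x * G (x + z)) :=
    (hHcont.mul hGc2).integrable_of_hasCompactSupport hHsupp.mul_right
  have i3 : Integrable (fun x : EuclideanSpace ℝ (Fin d) => H x * G (x - z)) :=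
    (hHcont.mul hGc3).integrable_of_hasCompactSupport hHsupp.mul_right
  have i4 : Integrable (fun x : EuclideanSpace ℝ (Fin d) => H (x + z) * G x) :=
    (hHc2.mul hGc).integrable_of_hasCompactSupport hGsupp.mul_left
  have i5 : Integrable (fun x : EuclideanSpace ℝ (Fin d) => H (x + z) * G (x + z)) := by
    have hcs : HasCompactSupport fun x : EuclideanSpace ℝ (Fin d) => H (x + z) * G (x + z) :=
      (hHsupp.mul_right (f' := G)).comp_homeomorph (Homeomorph.addRight z)
    exact (hHc2.mul hGc2).integrable_of_hasCompactSupport hcs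
  have T1 : ∫ x, H (x + z) * G (x + z) = ∫ x, H x * G x :=
    integral_add_right_eq_self (μ := (volume : Measure (EuclideanSpace ℝ (Fin d)))) (fun y => H y * G y) z
  have T2 : ∫ x, H (x + z) * G x = ∫ x, H x * G (x - z) := by
    have h := integral_add_right_eq_self (μ := (volume : Measure (EuclideanSpace ℝ (Fin d))))
      (fun y : EuclideanSpace ℝ (Fin d) => H y * G (y - z)) z
    simp only [add_sub_cancel_right] at h
    exact h
  have e1 : ∫ x, H x * (N x z / k z) = (∫ x, H x * N x z) / k z := by
    have h1 : (fun x : EuclideanSpace ℝ (Fin d) => H x * (N x z / k z))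
        = fun x => (H x * N x z) / k z := funext fun x => (mul_div_assoc _ _ _).symm
    rw [h1, integral_div]
  have e2 : ∫ x, H x * N x z
      = 2 * (∫ x, H x * G x) - (∫ x, H x * G (x + z)) - ∫ x, H x * G (x - z) := by
    have h1 : (fun x : EuclideanSpace ℝ (Fin d) => H x * N x z)
        = fun x => 2 * (H x * G x) - H x * G (x + z) - H x * G (x - z) :=
      funext fun x => by rw [hN]; ring
    have i12 : Integrable (fun x : EuclideanSpace ℝ (Fin d) =>
        2 * (H x * G x) - H x * G (x + z)) := (i1.const_mul 2).sub i2
    have i0 : Integrable (fun x : EuclideanSpace ℝ (Fin d) => 2 * (H x * G x)) := i1.const_mul 2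
    rw [h1, integral_sub i12 i3, integral_sub i0 i2, integral_const_mul]
  have e3 : ∫ x, (H x - H (x + z)) * (G x - G (x + z))
      = (∫ x, H x * G x) - (∫ x, H x * G (x + z)) - (∫ x, H (x + z) * G x)
        + ∫ x, H (x + z) * G (x + z) := by
    have h1 : (fun x : EuclideanSpace ℝ (Fin d) => (H x - H (x + z)) * (G x - G (x + z)))
        = fun x => H x * G x - H x * G (x + z) - H (x + z) * G x + H (x + z) * G (x + z) :=
      funext fun x => by ring
    have ia : Integrable (fun x : EuclideanSpace ℝ (Fin d) =>
        H x * G x - H x * G (x + z) - H (x + z) * G x) := (i1.sub i2).sub i4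
    have ib : Integrable (fun x : EuclideanSpace ℝ (Fin d) =>
        H x * G x - H x * G (x + z)) := i1.sub i2
    rw [h1, integral_add ia i5, integral_sub ib i4, integral_sub i1 i2]
  have key : ∫ x, H x * N x z = ∫ x, (H x - H (x + z)) * (G x - G (x + z)) := by
    rw [e2, e3, T1, T2]
    ring
  rw [e1, key]
  exact div_nonneg (integral_nonneg fun x => hsign x (x + z)) (hk_nonneg z)

theorem nonlocal_dissipation_nonneg
    (d : ℕ) (hd : 1 ≤ d) (α : ℝ) (hα0 : 0 < α) (hα2 : α < 2)
    (g h : ℝ → ℝ) (hg_smooth : ContDiff ℝ 2 g) (hh_smooth : ContDiff ℝ 2 h)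
    (hg_mono : StrictMono g) (hh_mono : StrictMono h)
    (hg0 : g 0 = 0) (hh0 : h 0 = 0)
    (v : EuclideanSpace ℝ (Fin d) → ℝ) (hv_smooth : ContDiff ℝ (⊤ : ℕ∞) v)
    (hv_supp : HasCompactSupport v) (hv_nonneg : ∀ x, 0 ≤ v x) :
    (∀ x : EuclideanSpace ℝ (Fin d),
        Integrable (fun z : EuclideanSpace ℝ (Fin d) =>
          (2 * g (v x) - g (v (x + z)) - g (v (x - z))) / ‖z‖ ^ ((d : ℝ) + α))) ∧
    Integrable (fun x : EuclideanSpace ℝ (Fin d) =>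
        h (v x) * ∫ z : EuclideanSpace ℝ (Fin d),
          (2 * g (v x) - g (v (x + z)) - g (v (x - z))) / ‖z‖ ^ ((d : ℝ) + α)) ∧
    0 ≤ ∫ x : EuclideanSpace ℝ (Fin d),
        h (v x) * ∫ z : EuclideanSpace ℝ (Fin d),
          (2 * g (v x) - g (v (x + z)) - g (v (x - z))) / ‖z‖ ^ ((d : ℝ) + α) := by
  have hGsm : ContDiff ℝ 2 (g ∘ v) := hg_smooth.comp (hv_smooth.of_le (WithTop.coe_le_coe.2 le_top))
  have hGsupp : HasCompactSupport (g ∘ v) := hv_supp.comp_left hg0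
  have hHcont : Continuous (h ∘ v) := hh_smooth.continuous.comp hv_smooth.continuous
  have hHsupp : HasCompactSupport (h ∘ v) := hv_supp.comp_left hh0
  have hsign : ∀ a b : EuclideanSpace ℝ (Fin d),
      0 ≤ ((h ∘ v) a - (h ∘ v) b) * ((g ∘ v) a - (g ∘ v) b) := by
    intro a b
    rcases le_total (v a) (v b) with hab | hab
    · have h1 : h (v a) ≤ h (v b) := hh_mono.monotone hab
      have h2 : g (v a) ≤ g (v b) := hg_mono.monotone hab
      have := mul_nonneg (sub_nonneg.2 h1) (sub_nonneg.2 h2)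
      simp only [Function.comp_apply]
      nlinarith
    · have h1 : h (v b) ≤ h (v a) := hh_mono.monotone hab
      have h2 : g (v b) ≤ g (v a) := hg_mono.monotone hab
      simp only [Function.comp_apply]
      exact mul_nonneg (sub_nonneg.2 h1) (sub_nonneg.2 h2)
  exact dissipation_aux d hd α hα0 hα2 (g ∘ v) (h ∘ v) hGsm hGsupp hHcont hHsupp hsign
end

section
/- (Integral Gronwall-type lemma.) Let T > 0, K > 0, γ > 0. Let f : [0,T] → (0,∞) be nonincreasing, and let g : [0,T] → ℝ be continuously differentiable and strictly increasing with g(0) = 0. Assume that for all 0 ≤ s ≤ t ≤ T, f(t) + K ∫_s^t f(τ)^{γ+1} g'(τ) dτ ≤ f(s). Then for every t ∈ (0,T], f(t) ≤ ( K γ g(t) )^{-1/γ}. -/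
open MeasureTheory Real Set Filter Topology

/-- Bernoulli/convexity type inequality: for `0 < b ≤ a` and `γ > 0`,
`γ * a^(-(γ+1)) * (a - b) ≤ b^(-γ) - a^(-γ)`. -/
lemma igl_bernoulli {a b γ : ℝ} (hb : 0 < b) (hba : b ≤ a) (hγ : 0 < γ) :
    γ * a ^ (-(γ + 1)) * (a - b) ≤ b ^ (-γ) - a ^ (-γ) := by
  have ha : 0 < a := hb.trans_le hba
  have hr : 0 < b / a := div_pos hb ha
  have h1 : Real.log (b / a) ≤ b / a - 1 := Real.log_le_sub_one_of_pos hr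
  have h2 : (b / a) ^ (-γ) = Real.exp (Real.log (b / a) * (-γ)) :=
    Real.rpow_def_of_pos hr _
  have h3 : 1 + Real.log (b / a) * (-γ) ≤ (b / a) ^ (-γ) := by
    rw [h2]; linarith [Real.add_one_le_exp (Real.log (b / a) * (-γ))]
  have h4 : (b / a - 1) * (-γ) ≤ Real.log (b / a) * (-γ) :=
    mul_le_mul_of_nonpos_right h1 (by linarith)
  have h5 : 1 + γ * (a - b) / a ≤ (b / a) ^ (-γ) := by
    have heq : (b / a - 1) * (-γ) = γ * (a - b) / a := by field_simp; ring
    rw [heq] at h4; linarith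
  have hdiv : (b / a) ^ (-γ) = b ^ (-γ) / a ^ (-γ) := Real.div_rpow hb.le ha.le _
  have hapos : (0:ℝ) < a ^ (-γ) := Real.rpow_pos_of_pos ha _
  have h6 : (1 + γ * (a - b) / a) * a ^ (-γ) ≤ b ^ (-γ) := by
    rw [hdiv] at h5
    calc (1 + γ * (a - b) / a) * a ^ (-γ) ≤ b ^ (-γ) / a ^ (-γ) * a ^ (-γ) :=
          mul_le_mul_of_nonneg_right h5 hapos.le
      _ = b ^ (-γ) := by field_simp
  have h7 : a ^ (-(γ + 1)) = a ^ (-γ) / a := by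
    rw [show -(γ + 1) = -γ + (-1) by ring, Real.rpow_add ha, Real.rpow_neg_one]
    ring
  have h8 : (1 + γ * (a - b) / a) * a ^ (-γ) = a ^ (-γ) + γ * a ^ (-(γ + 1)) * (a - b) := by
    rw [h7]; field_simp
  rw [h8] at h6; linarith

theorem integral_gronwall_type_lemma
    (T K γ : ℝ) (hT : 0 < T) (hK : 0 < K) (hγ : 0 < γ)
    (f g g' : ℝ → ℝ)
    (hf_pos : ∀ t ∈ Icc 0 T, 0 < f t)
    (hf_anti : AntitoneOn f (Icc 0 T))
    (hg_deriv : ∀ t ∈ Icc 0 T, HasDerivAt g (g' t) t)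
    (hg'_cont : ContinuousOn g' (Icc 0 T))
    (hg_mono : StrictMonoOn g (Icc 0 T))
    (hg0 : g 0 = 0)
    (hineq : ∀ s ∈ Icc 0 T, ∀ t ∈ Icc 0 T, s ≤ t →
      f t + K * ∫ τ in s..t, f τ ^ (γ + 1) * g' τ ≤ f s) :
    ∀ t ∈ Ioc 0 T, f t ≤ (K * γ * g t) ^ (-1 / γ) := by
  -- g' is nonnegative on [0, T]
  have hg'_nonneg : ∀ x ∈ Icc 0 T, 0 ≤ g' x := by
    intro x hx
    rcases lt_or_eq_of_le hx.2 with hxT | hxT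
    · -- use right slopes
      have hd : HasDerivWithinAt g (g' x) (Ioc x T) x := (hg_deriv x hx).hasDerivWithinAt
      have hx' : x ∉ Ioc x T := fun h => lt_irrefl x h.1
      have hts : Tendsto (slope g x) (𝓝[Ioc x T] x) (𝓝 (g' x)) :=
        (hasDerivWithinAt_iff_tendsto_slope' hx').mp hd
      haveI : (𝓝[Ioc x T] x).NeBot := left_nhdsWithin_Ioc_neBot hxT
      refine ge_of_tendsto hts ?_
      filter_upwards [self_mem_nhdsWithin] with y hy
      have hyIcc : y ∈ Icc 0 T := ⟨hx.1.trans hy.1.le, hy.2⟩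
      have h1 : g x < g y := hg_mono hx hyIcc hy.1
      have h2 : 0 < y - x := sub_pos.mpr hy.1
      rw [slope_def_field]
      exact div_nonneg (by linarith) (by linarith)
    · -- x = T : use left slopes
      have hd : HasDerivWithinAt g (g' x) (Ico 0 T) x := (hg_deriv x hx).hasDerivWithinAt
      have hx' : x ∉ Ico 0 T := fun h => lt_irrefl x (by rw [hxT] at h ⊢; exact h.2)
      have hts : Tendsto (slope g x) (𝓝[Ico 0 T] x) (𝓝 (g' x)) :=
        (hasDerivWithinAt_iff_tendsto_slope' hx').mp hd
      haveI : (𝓝[Ico 0 T] x).NeBot := by rw [hxT]; exact right_nhdsWithin_Ico_neBot hT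
      refine ge_of_tendsto hts ?_
      filter_upwards [self_mem_nhdsWithin] with y hy
      have hyx : y < x := by rw [hxT]; exact hy.2
      have hyIcc : y ∈ Icc 0 T := ⟨hy.1, hy.2.le⟩
      have h1 : g y < g x := hg_mono hyIcc hx hyx
      have h2 : y - x < 0 := sub_neg.mpr hyx
      rw [slope_def_field]
      rw [div_nonneg_iff]; right; constructor <;> linarith
  have hg_mono' : MonotoneOn g (Icc 0 T) := hg_mono.monotoneOn
  -- FTC for g
  have hgint : ∀ s ∈ Icc 0 T, ∀ u ∈ Icc 0 T, s ≤ u →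
      (∫ τ in s..u, g' τ) = g u - g s := by
    intro s hs u hu hsu
    have hsub : uIcc s u ⊆ Icc 0 T := by
      rw [uIcc_of_le hsu]; exact Icc_subset_Icc hs.1 hu.2
    exact intervalIntegral.integral_eq_sub_of_hasDerivAt
      (fun τ hτ => hg_deriv τ (hsub hτ))
      ((hg'_cont.mono hsub).intervalIntegrable)
  -- one-step inequality
  have step : ∀ s ∈ Icc 0 T, ∀ u ∈ Icc 0 T, s ≤ u →
      K * (f u ^ (γ + 1) * (g u - g s)) ≤ f s - f u := by
    intro s hs u hu hsu
    have hsub : Icc s u ⊆ Icc 0 T := Icc_subset_Icc hs.1 hu.2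
    have huicc : uIcc s u = Icc s u := uIcc_of_le hsu
    have hsub' : uIcc s u ⊆ Icc 0 T := huicc ▸ hsub
    have hfa : AntitoneOn (fun τ => f τ ^ (γ + 1)) (uIcc s u) := by
      rw [huicc]
      intro x hx y hy hxy
      exact Real.rpow_le_rpow (hf_pos y (hsub hy)).le
        (hf_anti (hsub hx) (hsub hy) hxy) (by linarith)
    have hint1 : IntervalIntegrable (fun τ => f τ ^ (γ + 1) * g' τ) volume s u :=
      hfa.intervalIntegrable.mul_continuousOn (hg'_cont.mono hsub')
    have hint2 : IntervalIntegrable (fun τ => f u ^ (γ + 1) * g' τ) volume s u :=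
      ((hg'_cont.mono hsub').intervalIntegrable).const_mul _
    have hmono : ∀ τ ∈ Icc s u, f u ^ (γ + 1) * g' τ ≤ f τ ^ (γ + 1) * g' τ := by
      intro τ hτ
      exact mul_le_mul_of_nonneg_right
        (Real.rpow_le_rpow (hf_pos u hu).le (hf_anti (hsub hτ) hu hτ.2) (by linarith))
        (hg'_nonneg τ (hsub hτ))
    have hI := intervalIntegral.integral_mono_on hsu hint2 hint1 hmono
    rw [intervalIntegral.integral_const_mul, hgint s hs u hu hsu] at hI
    have h0 := hineq s hs u hu hsu
    nlinarith [mul_le_mul_of_nonneg_left hI hK.le]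
  -- main argument
  intro t ht
  have htIcc : t ∈ Icc 0 T := ⟨ht.1.le, ht.2⟩
  have h0Icc : (0:ℝ) ∈ Icc 0 T := ⟨le_refl 0, hT.le⟩
  have hgt : 0 < g t := by
    have := hg_mono h0Icc htIcc ht.1
    rwa [hg0] at this
  have hft : 0 < f t := hf_pos t htIcc
  -- key claim via sInf argument
  have key : ∀ ε : ℝ, 0 < ε → ε < 1 → (1 - ε) * (K * γ * g t) ≤ f t ^ (-γ) := by
    intro ε hε0 hε1
    have hKγ : 0 < (1 - ε) * (K * γ) := mul_pos (by linarith) (by positivity)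
    set S : Set ℝ := {s | s ∈ Icc 0 t ∧
      (1 - ε) * (K * γ) * (g t - g s) ≤ f t ^ (-γ) - f s ^ (-γ)} with hS
    have htS : t ∈ S := ⟨⟨ht.1.le, le_refl t⟩, by simp⟩
    have hSne : S.Nonempty := ⟨t, htS⟩
    have hSbdd : BddBelow S := ⟨0, fun s hs => hs.1.1⟩
    set s₀ := sInf S with hs₀def
    have hs₀0 : 0 ≤ s₀ := le_csInf hSne fun s hs => hs.1.1
    have hs₀t : s₀ ≤ t := csInf_le hSbdd htS
    have hs₀Icc : s₀ ∈ Icc 0 T := ⟨hs₀0, hs₀t.trans ht.2⟩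
    have hs₀Icct : s₀ ∈ Icc 0 t := ⟨hs₀0, hs₀t⟩
    -- membership of s in S implies s₀ ≤ s and f s₀ ^ (-γ) ≤ f s ^ (-γ)
    have hmem : ∀ s ∈ S, f s₀ ^ (-γ) ≤ f s ^ (-γ) := by
      intro s hs
      have hs₀s : s₀ ≤ s := csInf_le hSbdd hs
      have hsIcc : s ∈ Icc 0 T := ⟨hs.1.1, hs.1.2.trans ht.2⟩
      exact Real.rpow_le_rpow_of_nonpos (hf_pos s hsIcc)
        (hf_anti hs₀Icc hsIcc hs₀s) (by linarith)
    -- g continuous at s₀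
    have hgc : ContinuousAt g s₀ := (hg_deriv s₀ hs₀Icc).continuousAt
    -- s₀ ∈ S
    have hs₀S : s₀ ∈ S := by
      refine ⟨hs₀Icct, ?_⟩
      by_contra hcon
      push_neg at hcon
      set δ := (1 - ε) * (K * γ) * (g t - g s₀) - (f t ^ (-γ) - f s₀ ^ (-γ)) with hδ
      have hδ0 : 0 < δ := by simp only [hδ]; linarith
      obtain ⟨η, hη0, hηb⟩ := Metric.continuousAt_iff.mp hgc (δ / ((1 - ε) * (K * γ)))
        (div_pos hδ0 hKγ)
      obtain ⟨s, hsS, hss⟩ := Real.lt_sInf_add_pos hSne hη0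
      have hs₀s : s₀ ≤ s := csInf_le hSbdd hsS
      have hdist : dist s s₀ < η := by
        rw [Real.dist_eq, abs_of_nonneg (by linarith)]
        rw [← hs₀def] at hss; linarith
      have hgb := hηb hdist
      rw [Real.dist_eq] at hgb
      have hgs : g s - g s₀ < δ / ((1 - ε) * (K * γ)) := (abs_lt.mp hgb).2
      have h1 := hsS.2
      have h2 := hmem s hsS
      have h3 : (1 - ε) * (K * γ) * (g s - g s₀) < δ := by
        have := mul_lt_mul_of_pos_left hgs hKγ
        rwa [mul_div_cancel₀ _ (ne_of_gt hKγ)] at this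
      simp only [hδ] at h3
      linarith
    -- s₀ must be 0
    have hs₀eq : s₀ = 0 := by
      by_contra hne
      have hs₀pos : 0 < s₀ := lt_of_le_of_ne hs₀0 (Ne.symm hne)
      have hfs₀ : 0 < f s₀ := hf_pos s₀ hs₀Icc
      by_cases hcase : ∃ s ∈ Ico 0 s₀, (1 - ε) * f s ^ (γ + 1) ≤ f s₀ ^ (γ + 1)
      · obtain ⟨s, hs, hratio⟩ := hcase
        have hsIcc : s ∈ Icc 0 T := ⟨hs.1, (hs.2.le.trans hs₀t).trans ht.2⟩
        have hfs : 0 < f s := hf_pos s hsIcc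
        have hfss₀ : f s₀ ≤ f s := hf_anti hsIcc hs₀Icc hs.2.le
        have hstep := step s hsIcc s₀ hs₀Icc hs.2.le
        have hbern := igl_bernoulli hfs₀ hfss₀ hγ
        have hgm : 0 ≤ g s₀ - g s := by
          have := hg_mono' hsIcc hs₀Icc hs.2.le; linarith
        -- (f s)^(-(γ+1)) * f s₀ ^ (γ+1) ≥ 1 - ε
        have hinv : f s ^ (-(γ + 1)) = (f s ^ (γ + 1))⁻¹ := by
          rw [Real.rpow_neg hfs.le]
        have hfsp : 0 < f s ^ (γ + 1) := Real.rpow_pos_of_pos hfs _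
        have hr : (1 - ε) ≤ f s ^ (-(γ + 1)) * f s₀ ^ (γ + 1) := by
          rw [hinv, inv_mul_eq_div, le_div_iff₀ hfsp]
          linarith
        -- chain
        have hchain : (1 - ε) * (K * γ) * (g s₀ - g s) ≤ f s₀ ^ (-γ) - f s ^ (-γ) := by
          have hfsneg : 0 < f s ^ (-(γ + 1)) := Real.rpow_pos_of_pos hfs _
          have e1 : γ * f s ^ (-(γ + 1)) * (f s - f s₀) ≤ f s₀ ^ (-γ) - f s ^ (-γ) := hbern
          have e2 : K * (f s₀ ^ (γ + 1) * (g s₀ - g s)) ≤ f s - f s₀ := hstep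
          have e3 : γ * f s ^ (-(γ + 1)) * (K * (f s₀ ^ (γ + 1) * (g s₀ - g s)))
              ≤ γ * f s ^ (-(γ + 1)) * (f s - f s₀) :=
            mul_le_mul_of_nonneg_left e2 (by positivity)
          have e4 : (1 - ε) * (K * γ) * (g s₀ - g s)
              ≤ γ * f s ^ (-(γ + 1)) * (K * (f s₀ ^ (γ + 1) * (g s₀ - g s))) := by
            have : γ * f s ^ (-(γ + 1)) * (K * (f s₀ ^ (γ + 1) * (g s₀ - g s)))
                = (f s ^ (-(γ + 1)) * f s₀ ^ (γ + 1)) * (K * γ) * (g s₀ - g s) := by ring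
            rw [this]
            apply mul_le_mul_of_nonneg_right _ hgm
            exact mul_le_mul_of_nonneg_right hr (by positivity)
          linarith
        have hsS : s ∈ S := by
          refine ⟨⟨hs.1, hs.2.le.trans hs₀t⟩, ?_⟩
          have := hs₀S.2
          nlinarith [hchain]
        have := csInf_le hSbdd hsS
        rw [← hs₀def] at this
        linarith [hs.2]
      · push_neg at hcase
        -- jump case
        set m := ((1 - ε)⁻¹) ^ ((γ + 1)⁻¹) with hm
        have hεinv : 1 < (1 - ε)⁻¹ := by
          rw [lt_inv_comm₀] <;> simp <;> linarith
        have hm1 : 1 < m := by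
          rw [hm, Real.one_lt_rpow_iff_of_pos (by positivity)]
          left; exact ⟨hεinv, by positivity⟩
        set c := m * f s₀ with hc
        have hcpos : 0 < c := by positivity
        have hs₀c : f s₀ < c := by
          rw [hc]; nlinarith
        have hcp : c ^ (γ + 1) = (1 - ε)⁻¹ * f s₀ ^ (γ + 1) := by
          rw [hc, Real.mul_rpow (by positivity) hfs₀.le, hm,
            ← Real.rpow_mul (by positivity : (0:ℝ) ≤ (1 - ε)⁻¹),
            inv_mul_cancel₀ (by linarith : γ + 1 ≠ 0), Real.rpow_one]
        have hflb : ∀ s ∈ Ico 0 s₀, c ≤ f s := by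
          intro s hs
          by_contra hlt
          push_neg at hlt
          have hsIcc : s ∈ Icc 0 T := ⟨hs.1, (hs.2.le.trans hs₀t).trans ht.2⟩
          have hfs : 0 < f s := hf_pos s hsIcc
          have := Real.rpow_lt_rpow hfs.le hlt (by linarith : (0:ℝ) < γ + 1)
          rw [hcp] at this
          have h2 := hcase s hs
          have h3 : (1 - ε) * f s ^ (γ + 1) < (1 - ε) * ((1 - ε)⁻¹ * f s₀ ^ (γ + 1)) :=
            mul_lt_mul_of_pos_left this (by linarith)
          rw [← mul_assoc, mul_inv_cancel₀ (by linarith : (1:ℝ) - ε ≠ 0), one_mul] at h3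
          linarith
        set δ := f s₀ ^ (-γ) - c ^ (-γ) with hδ
        have hδ0 : 0 < δ := by
          have := Real.rpow_lt_rpow_of_neg hfs₀ hs₀c (by linarith : -γ < 0)
          simp only [hδ]; linarith
        obtain ⟨η, hη0, hηb⟩ := Metric.continuousAt_iff.mp hgc (δ / ((1 - ε) * (K * γ)))
          (div_pos hδ0 hKγ)
        set s := max 0 (s₀ - η / 2) with hsdef
        have hs0 : 0 ≤ s := le_max_left _ _
        have hss₀ : s < s₀ := by
          rw [hsdef]; apply max_lt hs₀pos; linarith
        have hsIco : s ∈ Ico 0 s₀ := ⟨hs0, hss₀⟩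
        have hsIcc : s ∈ Icc 0 T := ⟨hs0, (hss₀.le.trans hs₀t).trans ht.2⟩
        have hdist : dist s s₀ < η := by
          rw [Real.dist_eq, abs_of_nonpos (by linarith)]
          have : s₀ - η / 2 ≤ s := le_max_right _ _
          linarith
        have hgb := hηb hdist
        rw [Real.dist_eq] at hgb
        have hgs : g s₀ - g s < δ / ((1 - ε) * (K * γ)) := by
          have := (abs_lt.mp hgb).1; linarith
        have h3 : (1 - ε) * (K * γ) * (g s₀ - g s) < δ := by
          have := mul_lt_mul_of_pos_left hgs hKγ
          rwa [mul_div_cancel₀ _ (ne_of_gt hKγ)] at this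
        have hjump : f s ^ (-γ) ≤ c ^ (-γ) :=
          Real.rpow_le_rpow_of_nonpos hcpos (hflb s hsIco) (by linarith)
        have hsS : s ∈ S := by
          refine ⟨⟨hs0, hss₀.le.trans hs₀t⟩, ?_⟩
          have := hs₀S.2
          simp only [hδ] at h3 hjump
          nlinarith
        have := csInf_le hSbdd hsS
        rw [← hs₀def] at this
        linarith
    -- conclude: 0 ∈ S
    rw [hs₀eq] at hs₀S
    have h0S := hs₀S.2
    rw [hg0, sub_zero] at h0S
    have hf0 : 0 < f 0 ^ (-γ) := Real.rpow_pos_of_pos (hf_pos 0 h0Icc) _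
    calc (1 - ε) * (K * γ * g t) = (1 - ε) * (K * γ) * g t := by ring
      _ ≤ f t ^ (-γ) - f 0 ^ (-γ) := h0S
      _ ≤ f t ^ (-γ) := by linarith
  -- take ε → 0
  have hfinal : K * γ * g t ≤ f t ^ (-γ) := by
    by_contra hcon
    push_neg at hcon
    have hA : 0 < K * γ * g t := by positivity
    have hftneg : 0 < f t ^ (-γ) := Real.rpow_pos_of_pos hft _
    set ε := (K * γ * g t - f t ^ (-γ)) / (2 * (K * γ * g t)) with hε
    have hε0 : 0 < ε := div_pos (by linarith) (by positivity)
    have hε1 : ε < 1 := by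
      rw [hε, div_lt_one (by positivity)]; linarith
    have := key ε hε0 hε1
    rw [hε] at this
    have h2 : (1 - (K * γ * g t - f t ^ (-γ)) / (2 * (K * γ * g t))) * (K * γ * g t)
        = K * γ * g t - (K * γ * g t - f t ^ (-γ)) / 2 := by
      field_simp
    rw [h2] at this
    linarith
  -- conclude
  have hA : 0 < K * γ * g t := by positivity
  have h1 : (f t ^ (-γ)) ^ (-1 / γ) ≤ (K * γ * g t) ^ (-1 / γ) :=
    Real.rpow_le_rpow_of_nonpos hA hfinal (by
      apply div_nonpos_of_nonpos_of_nonneg <;> linarith)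
  have h2 : (f t ^ (-γ)) ^ (-1 / γ) = f t := by
    rw [← Real.rpow_mul hft.le]
    have : -γ * (-1 / γ) = 1 := by field_simp
    rw [this, Real.rpow_one]
  rwa [h2] at h1
end

section
/- (Pointwise Stroock–Varopoulos inequality.) Let q > 1. Then for all real numbers a, b: (a - b) ( sgn(a)|a|^{q-1} - sgn(b)|b|^{q-1} ) ≥ (4(q-1)/q²) ( sgn(a)|a|^{q/2} - sgn(b)|b|^{q/2} )² ≥ (4(q-1)/q²) ( |a|^{q/2} - |b|^{q/2} )². -/
open Real

open intervalIntegral in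
private lemma sv_key_core {r v u : ℝ} (hr0 : 0 < r) (hr2 : r < 2) (hv : 0 < v)
    (hvu : v < u) :
    (u - v) ^ 2 ≤ ((u ^ r - v ^ r) / r) * ((u ^ (2 - r) - v ^ (2 - r)) / (2 - r)) := by
  have hu : 0 < u := hv.trans hvu
  set F : ℝ := (u ^ r - v ^ r) / r with hFdef
  set G : ℝ := (u ^ (2 - r) - v ^ (2 - r)) / (2 - r) with hGdef
  have h2r : (0:ℝ) < 2 - r := by linarith
  have hF : 0 < F := div_pos (sub_pos.2 (Real.rpow_lt_rpow hv.le hvu hr0)) hr0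
  have hG : 0 < G := div_pos (sub_pos.2 (Real.rpow_lt_rpow hv.le hvu h2r)) h2r
  set lam : ℝ := (u - v) / G with hlamdef
  have huv : 0 < u - v := by linarith
  have hlam : 0 < lam := div_pos huv hG
  -- integral identities
  have hFi : (∫ t in v..u, t ^ (r - 1)) = F := by
    rw [integral_rpow (Or.inl (by linarith))]
    rw [show r - 1 + 1 = r by ring, hFdef]
  have hGi : (∫ t in v..u, t ^ (1 - r)) = G := by
    rw [integral_rpow (Or.inl (by linarith))]
    rw [show 1 - r + 1 = 2 - r by ring, hGdef]
  -- integrability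
  have hpos : ∀ t ∈ Set.uIcc v u, t ≠ 0 ∨ (0:ℝ) ≤ r - 1 := by
    intro t ht
    rw [Set.uIcc_of_le hvu.le] at ht
    exact Or.inl (ne_of_gt (lt_of_lt_of_le hv ht.1))
  have hpos' : ∀ t ∈ Set.uIcc v u, t ≠ 0 ∨ (0:ℝ) ≤ 1 - r := by
    intro t ht
    rw [Set.uIcc_of_le hvu.le] at ht
    exact Or.inl (ne_of_gt (lt_of_lt_of_le hv ht.1))
  have hi1 : IntervalIntegrable (fun t : ℝ => t ^ (r - 1)) MeasureTheory.volume v u :=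
    (ContinuousOn.rpow_const continuousOn_id hpos).intervalIntegrable
  have hi2 : IntervalIntegrable (fun t : ℝ => t ^ (1 - r)) MeasureTheory.volume v u :=
    (ContinuousOn.rpow_const continuousOn_id hpos').intervalIntegrable
  have hi : IntervalIntegrable
      (fun t : ℝ => (1 / lam) * t ^ (r - 1) + lam * t ^ (1 - r))
      MeasureTheory.volume v u :=
    ((hi1.const_mul _).add (hi2.const_mul _))
  -- pointwise AM-GM
  have hpw : ∀ t ∈ Set.Icc v u,
      (fun _ : ℝ => (2:ℝ)) t ≤ (fun t : ℝ => (1 / lam) * t ^ (r - 1) + lam * t ^ (1 - r)) t := by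
    intro t ht
    have ht0 : 0 < t := lt_of_lt_of_le hv ht.1
    have hx : 0 < (1 / lam) * t ^ (r - 1) :=
      mul_pos (by positivity) (Real.rpow_pos_of_pos ht0 _)
    have hy : 0 < lam * t ^ (1 - r) := mul_pos hlam (Real.rpow_pos_of_pos ht0 _)
    have hxy : ((1 / lam) * t ^ (r - 1)) * (lam * t ^ (1 - r)) = 1 := by
      calc ((1 / lam) * t ^ (r - 1)) * (lam * t ^ (1 - r))
          = (1 / lam * lam) * (t ^ (r - 1) * t ^ (1 - r)) := by ring
        _ = (1 / lam * lam) * t ^ (r - 1 + (1 - r)) := by rw [Real.rpow_add ht0]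
        _ = 1 := by
            rw [show r - 1 + (1 - r) = (0:ℝ) by ring, Real.rpow_zero, mul_one, one_div,
              inv_mul_cancel₀ hlam.ne']
    simp only
    nlinarith [mul_nonneg (sq_nonneg ((1 / lam) * t ^ (r - 1) - 1)) hy.le, hx, hy, hxy]
  have hmono := intervalIntegral.integral_mono_on hvu.le intervalIntegrable_const hi hpw
  rw [intervalIntegral.integral_add (hi1.const_mul _) (hi2.const_mul _),
    intervalIntegral.integral_const_mul, intervalIntegral.integral_const_mul,
    hFi, hGi, intervalIntegral.integral_const, smul_eq_mul] at hmono
  -- hmono : (u - v) * 2 ≤ (1/lam) * F + lam * G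
  have hsub : (1 / lam) * F + lam * G = F * G / (u - v) + (u - v) := by
    rw [hlamdef]
    field_simp
  rw [hsub] at hmono
  have h1 : u - v ≤ F * G / (u - v) := by linarith
  calc (u - v) ^ 2 = (u - v) * (u - v) := by ring
    _ ≤ (F * G / (u - v)) * (u - v) := mul_le_mul_of_nonneg_right h1 huv.le
    _ = F * G := div_mul_cancel₀ _ huv.ne'

private lemma sv_key_s17 {r v u : ℝ} (hr0 : 0 < r) (hr2 : r < 2) (hv : 0 ≤ v) (hvu : v ≤ u) :
    r * (2 - r) * (u - v) ^ 2 ≤ (u ^ r - v ^ r) * (u ^ (2 - r) - v ^ (2 - r)) := by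
  have h2r : (0:ℝ) < 2 - r := by linarith
  rcases eq_or_lt_of_le hvu with h | hvu'
  · subst h; simp
  rcases eq_or_lt_of_le hv with h | hv'
  · -- v = 0
    subst h
    rw [Real.zero_rpow hr0.ne', Real.zero_rpow h2r.ne', sub_zero, sub_zero, sub_zero,
      ← Real.rpow_add hvu', show r + (2 - r) = (2:ℝ) by ring, Real.rpow_two]
    nlinarith [sq_nonneg (r - 1), sq_nonneg u]
  · have h := sv_key_core hr0 hr2 hv' hvu'
    have hr2r : 0 < r * (2 - r) := mul_pos hr0 h2r
    rw [← sub_nonneg]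
    have e : (u ^ r - v ^ r) * (u ^ (2 - r) - v ^ (2 - r)) - r * (2 - r) * (u - v) ^ 2 =
        (r * (2 - r)) *
          (((u ^ r - v ^ r) / r) * ((u ^ (2 - r) - v ^ (2 - r)) / (2 - r)) - (u - v) ^ 2) := by
      field_simp
    rw [e]
    exact mul_nonneg hr2r.le (by linarith)

/-- The nonnegative-pair case. -/
private lemma sv_nonneg {q : ℝ} (hq : 1 < q) {y x : ℝ} (hy : 0 ≤ y) (hyx : y ≤ x) :
    4 * (q - 1) / q ^ 2 * (x ^ (q / 2) - y ^ (q / 2)) ^ 2 ≤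
      (x - y) * (x ^ (q - 1) - y ^ (q - 1)) := by
  have hq0 : (0:ℝ) < q := by linarith
  have hx : 0 ≤ x := hy.trans hyx
  have hr0 : 0 < 2 / q := by positivity
  have hr2 : 2 / q < 2 := by
    rw [div_lt_iff₀ hq0]; nlinarith
  have hvu : y ^ (q / 2) ≤ x ^ (q / 2) := Real.rpow_le_rpow hy hyx (by positivity)
  have h := sv_key_s17 hr0 hr2 (Real.rpow_nonneg hy _) hvu
  have e1 : ∀ t : ℝ, 0 ≤ t → (t ^ (q / 2)) ^ (2 / q) = t := by
    intro t ht
    rw [← Real.rpow_mul ht]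
    rw [show q / 2 * (2 / q) = 1 by field_simp, Real.rpow_one]
  have e2 : ∀ t : ℝ, 0 ≤ t → (t ^ (q / 2)) ^ (2 - 2 / q) = t ^ (q - 1) := by
    intro t ht
    rw [← Real.rpow_mul ht]
    congr 1
    field_simp
  rw [e1 x hx, e1 y hy, e2 x hx, e2 y hy] at h
  have ec : 2 / q * (2 - 2 / q) = 4 * (q - 1) / q ^ 2 := by
    field_simp; ring
  rw [ec] at h
  exact h

set_option maxHeartbeats 1000000 in
/-- The opposite-sign case. -/
private lemma sv_opp {q : ℝ} (hq : 1 < q) {A B : ℝ} (hA : 0 ≤ A) (hB : 0 ≤ B) :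
    4 * (q - 1) / q ^ 2 * (A ^ (q / 2) + B ^ (q / 2)) ^ 2 ≤
      (A + B) * (A ^ (q - 1) + B ^ (q - 1)) := by
  have hq0 : (0:ℝ) < q := by linarith
  have hq2 : (0:ℝ) < q ^ 2 := by positivity
  have hc1 : 4 * (q - 1) / q ^ 2 ≤ 1 := by
    rw [div_le_one hq2]; nlinarith [sq_nonneg (q - 2)]
  have hc0 : 0 ≤ 4 * (q - 1) / q ^ 2 := div_nonneg (by linarith) hq2.le
  have hAq : A * A ^ (q - 1) = A ^ q := by
    have e : A ^ q = A ^ (1 + (q - 1)) := by congr 1; ring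
    rw [e, Real.rpow_add' hA (by intro hcon; nlinarith), Real.rpow_one]
  have hBq : B * B ^ (q - 1) = B ^ q := by
    have e : B ^ q = B ^ (1 + (q - 1)) := by congr 1; ring
    rw [e, Real.rpow_add' hB (by intro hcon; nlinarith), Real.rpow_one]
  have hA2 : A ^ (q / 2) * A ^ (q / 2) = A ^ q := by
    rw [← Real.rpow_add' hA (by intro hcon; nlinarith)]
    congr 1; ring
  have hB2 : B ^ (q / 2) * B ^ (q / 2) = B ^ q := by
    rw [← Real.rpow_add' hB (by intro hcon; nlinarith)]
    congr 1; ring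
  set X : ℝ := A ^ ((1:ℝ)/2) * B ^ ((q - 1)/2) with hX
  set Y : ℝ := A ^ ((q - 1)/2) * B ^ ((1:ℝ)/2) with hY
  have hX2 : X * X = A * B ^ (q - 1) := by
    rw [hX, mul_mul_mul_comm, ← Real.rpow_add' hA (by norm_num),
      ← Real.rpow_add' hB (by intro hcon; nlinarith)]
    rw [show (1:ℝ)/2 + 1/2 = 1 by norm_num, show (q-1)/2 + (q-1)/2 = q - 1 by ring,
      Real.rpow_one]
  have hY2 : Y * Y = B * A ^ (q - 1) := by
    rw [hY, mul_mul_mul_comm, ← Real.rpow_add' hA (by intro hcon; nlinarith),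
      ← Real.rpow_add' hB (by norm_num)]
    rw [show (1:ℝ)/2 + 1/2 = 1 by norm_num, show (q-1)/2 + (q-1)/2 = q - 1 by ring,
      Real.rpow_one]
    ring
  have hXY : X * Y = A ^ (q / 2) * B ^ (q / 2) := by
    rw [hX, hY, mul_mul_mul_comm, ← Real.rpow_add' hA (by intro hcon; nlinarith),
      ← Real.rpow_add' hB (by intro hcon; nlinarith)]
    rw [show (1:ℝ)/2 + (q-1)/2 = q/2 by ring, show (q-1)/2 + (1:ℝ)/2 = q/2 by ring]
  have hamgm : 2 * (X * Y) ≤ X * X + Y * Y := by nlinarith [sq_nonneg (X - Y)]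
  have hst : 0 ≤ A ^ (q / 2) * B ^ (q / 2) :=
    mul_nonneg (Real.rpow_nonneg hA _) (Real.rpow_nonneg hB _)
  have hAq0 : 0 ≤ A ^ q := Real.rpow_nonneg hA _
  have hBq0 : 0 ≤ B ^ q := Real.rpow_nonneg hB _
  have hcXY : 4 * (q - 1) / q ^ 2 * (A ^ (q / 2) * B ^ (q / 2)) ≤ A ^ (q / 2) * B ^ (q / 2) :=
    mul_le_of_le_one_left hst hc1
  have hcA : 4 * (q - 1) / q ^ 2 * A ^ q ≤ A ^ q := mul_le_of_le_one_left hAq0 hc1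
  have hcB : 4 * (q - 1) / q ^ 2 * B ^ q ≤ B ^ q := mul_le_of_le_one_left hBq0 hc1
  nlinarith [hamgm, hcXY, hcA, hcB, hAq, hBq, hA2, hB2, hX2, hY2, hXY]

noncomputable def sgnPow (p t : ℝ) : ℝ := Real.sign t * |t| ^ p

lemma sgnPow_neg (p t : ℝ) : sgnPow p (-t) = -sgnPow p t := by
  rw [sgnPow, sgnPow, abs_neg, Real.sign_neg]; ring

lemma sgnPow_of_nonneg {p t : ℝ} (hp : p ≠ 0) (ht : 0 ≤ t) : sgnPow p t = t ^ p := by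
  rcases eq_or_lt_of_le ht with h | h
  · rw [← h]
    simp [sgnPow, Real.sign_zero, Real.zero_rpow hp]
  · rw [sgnPow, Real.sign_of_pos h, abs_of_pos h, one_mul]

lemma sgnPow_of_neg' {p t : ℝ} (hp : p ≠ 0) (ht : t ≤ 0) : sgnPow p t = -((-t) ^ p) := by
  have h := sgnPow_neg p (-t)
  rw [neg_neg] at h
  rw [h, sgnPow_of_nonneg hp (by linarith)]

lemma abs_sgnPow {p : ℝ} (hp : p ≠ 0) (t : ℝ) : |sgnPow p t| = |t| ^ p := by
  rcases lt_trichotomy t 0 with h | h | h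
  · rw [sgnPow, Real.sign_of_neg h, neg_one_mul, abs_neg,
      abs_of_nonneg (Real.rpow_nonneg (abs_nonneg t) p)]
  · subst h
    rw [sgnPow, Real.sign_zero, zero_mul, abs_zero, Real.zero_rpow hp]
  · rw [sgnPow, Real.sign_of_pos h, one_mul,
      abs_of_nonneg (Real.rpow_nonneg (abs_nonneg t) p)]

private lemma sv_main1' {q : ℝ} (hq : 1 < q) {a b : ℝ} (hba : b ≤ a) :
    4 * (q - 1) / q ^ 2 * (sgnPow (q / 2) a - sgnPow (q / 2) b) ^ 2 ≤
      (a - b) * (sgnPow (q - 1) a - sgnPow (q - 1) b) := by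
  have hq0 : (0:ℝ) < q := by linarith
  have h2 : q / 2 ≠ 0 := (div_pos hq0 two_pos).ne'
  have h1 : q - 1 ≠ 0 := by intro h; nlinarith
  rcases le_or_gt 0 b with hb | hb
  · have ha : 0 ≤ a := hb.trans hba
    rw [sgnPow_of_nonneg h2 ha, sgnPow_of_nonneg h2 hb, sgnPow_of_nonneg h1 ha,
      sgnPow_of_nonneg h1 hb]
    exact sv_nonneg hq hb hba
  · rcases le_or_gt 0 a with ha | ha
    · -- b < 0 ≤ a
      have hB : 0 ≤ -b := by linarith
      rw [sgnPow_of_neg' h2 hb.le, sgnPow_of_neg' h1 hb.le, sgnPow_of_nonneg h2 ha,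
        sgnPow_of_nonneg h1 ha]
      have h := sv_opp hq ha hB
      calc 4 * (q - 1) / q ^ 2 * (a ^ (q / 2) - -(-b) ^ (q / 2)) ^ 2
          = 4 * (q - 1) / q ^ 2 * (a ^ (q / 2) + (-b) ^ (q / 2)) ^ 2 := by ring
        _ ≤ (a + -b) * (a ^ (q - 1) + (-b) ^ (q - 1)) := h
        _ = (a - b) * (a ^ (q - 1) - -(-b) ^ (q - 1)) := by ring
    · -- b ≤ a < 0
      have hA : 0 ≤ -a := by linarith
      have hAB : -a ≤ -b := by linarith
      rw [sgnPow_of_neg' h2 ha.le, sgnPow_of_neg' h2 hb.le, sgnPow_of_neg' h1 ha.le,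
        sgnPow_of_neg' h1 hb.le]
      have h := sv_nonneg hq hA hAB
      nlinarith [h]

private lemma sv_main1 {q : ℝ} (hq : 1 < q) (a b : ℝ) :
    4 * (q - 1) / q ^ 2 * (sgnPow (q / 2) a - sgnPow (q / 2) b) ^ 2 ≤
      (a - b) * (sgnPow (q - 1) a - sgnPow (q - 1) b) := by
  rcases le_total b a with h | h
  · exact sv_main1' hq h
  · have := sv_main1' hq (a := b) (b := a) h
    nlinarith [this]

theorem pointwise_stroock_varopoulos (q : ℝ) (hq : 1 < q) (a b : ℝ) :
    (a - b) * (Real.sign a * |a| ^ (q - 1) - Real.sign b * |b| ^ (q - 1)) ≥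
      4 * (q - 1) / q ^ 2 *
        (Real.sign a * |a| ^ (q / 2) - Real.sign b * |b| ^ (q / 2)) ^ 2 ∧
    4 * (q - 1) / q ^ 2 *
        (Real.sign a * |a| ^ (q / 2) - Real.sign b * |b| ^ (q / 2)) ^ 2 ≥
      4 * (q - 1) / q ^ 2 * (|a| ^ (q / 2) - |b| ^ (q / 2)) ^ 2 := by
  have hq0 : (0:ℝ) < q := by linarith
  have h2 : q / 2 ≠ 0 := (div_pos hq0 two_pos).ne'
  constructor
  · have := sv_main1 hq a b
    simp only [sgnPow] at this
    exact this
  · set x : ℝ := Real.sign a * |a| ^ (q / 2) with hx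
    set y : ℝ := Real.sign b * |b| ^ (q / 2) with hy
    have hax : |x| = |a| ^ (q / 2) := abs_sgnPow h2 a
    have hay : |y| = |b| ^ (q / 2) := abs_sgnPow h2 b
    have h1 : |x| - |y| ≤ |x - y| := abs_sub_abs_le_abs_sub x y
    have h2' : |y| - |x| ≤ |x - y| := by
      rw [abs_sub_comm]; exact abs_sub_abs_le_abs_sub y x
    have hsq : (|x| - |y|) ^ 2 ≤ (x - y) ^ 2 := by
      have := sq_le_sq' (by linarith : -|x - y| ≤ |x| - |y|) h1
      rwa [sq_abs] at this
    rw [← hax, ← hay]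
    have hc0 : 0 ≤ 4 * (q - 1) / q ^ 2 := div_nonneg (by linarith) (sq_nonneg q)
    exact mul_le_mul_of_nonneg_left hsq hc0
end
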